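/- arXiv:math/0311399 — 6 statements merged into one kernel-verified Lean document; each statement's English description precedes it below -/
import Mathlib

section
/- For every n ≥ 1, L_w(n) = C_w(n) + n − 1 = q^{n−1} + n − 2. -/
/-- A set `S` of words over the alphabet `Fin q` is unavoidable if the set of
`S`-free words (words containing no element of `S` as a contiguous subword) is finite. -/
def UnavoidableW {q : ℕ} (S : Set (List (Fin q))) : Prop :=
  {w : List (Fin q) | ∀ s ∈ S, ¬ s <:+: w}.Finite

/-- There is an arc (overlap) from `u` to `v` in the de Bruijn graph:
`u = a :: w` and `v = w ++ [b]` for some letters `a, b` and word `w`. -/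
def Overlap {α : Type*} (u v : List α) : Prop :=
  ∃ (a b : α) (w : List α), u = a :: w ∧ v = w ++ [b]

set_option linter.unusedVariables false
set_option linter.unusedSectionVars false
set_option linter.unreachableTactic false
set_option linter.unusedTactic false
set_option maxHeartbeats 1000000

open List

namespace DB

variable {q : ℕ}

/-- all length-m windows (factors) of W, in order of position -/
def wins (m : ℕ) (W : List (Fin q)) : List (List (Fin q)) :=
  (List.range (W.length + 1 - m)).map fun i => (W.drop i).take m

lemma wins_length {m : ℕ} {W : List (Fin q)} : (wins m W).length = W.length + 1 - m := by
  simp [wins]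

lemma wins_getElem {m : ℕ} {W : List (Fin q)} {i : ℕ} (h : i < (wins m W).length) :
    (wins m W)[i] = (W.drop i).take m := by
  simp [wins]

lemma mem_wins {m : ℕ} {W x : List (Fin q)} :
    x ∈ wins m W ↔ x.length = m ∧ x <:+: W := by
  constructor
  · rintro hx
    simp only [wins, List.mem_map, List.mem_range] at hx
    obtain ⟨i, hi, rfl⟩ := hx
    have him : i + m ≤ W.length := by omega
    constructor
    · simp; omega
    · exact ((W.drop i).take_prefix m).isInfix.trans (W.drop_suffix i).isInfix
  · rintro ⟨hlen, s, t, rfl⟩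
    simp only [wins, List.mem_map, List.mem_range]
    refine ⟨s.length, ?_, ?_⟩
    · simp; omega
    · rw [List.append_assoc, List.drop_left, ← hlen, List.take_left]

lemma length_of_mem_wins {m : ℕ} {W x : List (Fin q)} (hx : x ∈ wins m W) : x.length = m :=
  (mem_wins.1 hx).1

lemma wins_cons {m : ℕ} {W : List (Fin q)} (a : Fin q) (hm : m ≤ W.length + 1) :
    wins m (a :: W) = ((a :: W).take m) :: wins m W := by
  have : (a :: W).length + 1 - m = (W.length + 1 - m) + 1 := by simp; omega
  simp only [wins, this, List.range_succ_eq_map, List.map_cons, List.map_map]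
  congr 1

/-- All words of length m over Fin q. -/
def allW (q : ℕ) : ℕ → List (List (Fin q))
  | 0 => [[]]
  | m+1 => (List.finRange q).flatMap fun a => (allW q m).map (a :: ·)

lemma mem_allW {m : ℕ} {x : List (Fin q)} : x ∈ allW q m ↔ x.length = m := by
  induction m generalizing x with
  | zero => simp [allW, List.length_eq_zero_iff]
  | succ m ih =>
    simp only [allW, List.mem_flatMap, List.mem_map, List.mem_finRange]
    constructor
    · rintro ⟨a, -, y, hy, rfl⟩
      simp [ih.1 hy]
    · intro hx
      match x with
      | b :: y => exact ⟨b, trivial, y, ih.2 (by simpa using hx), rfl⟩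

lemma allW_nodup (m : ℕ) : (allW q m).Nodup := by
  induction m with
  | zero => simp [allW]
  | succ m ih =>
    simp only [allW]
    rw [List.nodup_flatMap]
    constructor
    · intro a _
      exact ih.map (fun x y h => by simpa using h)
    · rw [List.pairwise_iff_forall_sublist]
      rintro a b hs
      have hab : a ≠ b := by
        intro h; subst h
        exact (List.nodup_iff_sublist.1 (List.nodup_finRange q) a) hs
      simp only [Function.onFun, List.Disjoint, List.mem_map]
      rintro x ⟨y, _, rfl⟩ ⟨z, _, h⟩
      injection h with h1 h2
      exact hab h1.symm

lemma allW_length (m : ℕ) : (allW q m).length = q ^ m := by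
  induction m with
  | zero => simp [allW]
  | succ m ih =>
    simp only [allW, List.length_flatMap]
    have : ((List.length ∘ fun a => List.map (a :: ·) (allW q m)) : Fin q → ℕ) = fun _ => q ^ m := by
      funext a; simp [ih]
    simp only [List.length_map, ih]
    simp [pow_succ, mul_comm]

lemma nodup_wins_length_le {m : ℕ} {W : List (Fin q)} (nd : (wins m W).Nodup) :
    (wins m W).length ≤ q ^ m := by
  rw [← List.toFinset_card_of_nodup nd, ← allW_length (q := q) m,
    ← List.toFinset_card_of_nodup (allW_nodup m)]
  apply Finset.card_le_card
  intro x hx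
  simp only [List.mem_toFinset] at *
  exact mem_allW.2 (length_of_mem_wins hx)


lemma take_cons' {m : ℕ} (hm : 1 ≤ m) (a : Fin q) (W : List (Fin q)) :
    (a :: W).take m = a :: W.take (m-1) := by
  obtain ⟨k, rfl⟩ : ∃ k, m = k + 1 := ⟨m-1, by omega⟩
  simp [List.take_succ_cons]

def outC (m : ℕ) (W : List (Fin q)) (t : List (Fin q)) : ℕ :=
  ((wins m W).toFinset.filter (fun x => x.take (m-1) = t)).card

def inC (m : ℕ) (W : List (Fin q)) (t : List (Fin q)) : ℕ :=
  ((wins m W).toFinset.filter (fun x => x.drop 1 = t)).card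

lemma out_filter_subset {m : ℕ} (hm : 1 ≤ m) (W t : List (Fin q)) :
    ((wins m W).toFinset.filter (fun x => x.take (m-1) = t)) ⊆
      Finset.univ.image (fun c : Fin q => t ++ [c]) := by
  intro x hx
  simp only [Finset.mem_filter, List.mem_toFinset] at hx
  obtain ⟨hx1, hx2⟩ := hx
  have hlen := length_of_mem_wins hx1
  obtain ⟨c, hc⟩ := List.length_eq_one_iff.1 (show (x.drop (m-1)).length = 1 by
    rw [List.length_drop, hlen]; omega)
  exact Finset.mem_image.2 ⟨c, Finset.mem_univ _, by rw [← hx2, ← hc, List.take_append_drop]⟩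

lemma in_filter_subset {m : ℕ} (hm : 1 ≤ m) (W t : List (Fin q)) :
    ((wins m W).toFinset.filter (fun x => x.drop 1 = t)) ⊆
      Finset.univ.image (fun a : Fin q => a :: t) := by
  intro x hx
  simp only [Finset.mem_filter, List.mem_toFinset] at hx
  obtain ⟨hx1, hx2⟩ := hx
  have hlen := length_of_mem_wins hx1
  obtain ⟨c, hc⟩ := List.length_eq_one_iff.1 (show (x.take 1).length = 1 by
    rw [List.length_take]; omega)
  refine Finset.mem_image.2 ⟨c, Finset.mem_univ _, ?_⟩
  rw [← hx2, show c :: x.drop 1 = [c] ++ x.drop 1 from rfl, ← hc, List.take_append_drop]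

lemma outC_le {m : ℕ} (hm : 1 ≤ m) (W t : List (Fin q)) : outC m W t ≤ q := by
  refine (Finset.card_le_card (out_filter_subset hm W t)).trans ?_
  exact Finset.card_image_le.trans (by simp)

lemma inC_le {m : ℕ} (hm : 1 ≤ m) (W t : List (Fin q)) : inC m W t ≤ q := by
  refine (Finset.card_le_card (in_filter_subset hm W t)).trans ?_
  exact Finset.card_image_le.trans (by simp)

lemma inC_ge {m : ℕ} (W t : List (Fin q)) (h : ∀ a : Fin q, (a :: t) ∈ wins m W) :
    q ≤ inC m W t := by
  have hinj : Function.Injective (fun a : Fin q => a :: t) := by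
    intro a b hab; injection hab
  have himg : Finset.univ.image (fun a : Fin q => a :: t) ⊆
      ((wins m W).toFinset.filter (fun x => x.drop 1 = t)) := by
    intro x hx
    obtain ⟨a, -, rfl⟩ := Finset.mem_image.1 hx
    simp only [Finset.mem_filter, List.mem_toFinset]
    exact ⟨h a, rfl⟩
  calc q = (Finset.univ.image (fun a : Fin q => a :: t)).card := by
        rw [Finset.card_image_of_injective _ hinj]; simp
    _ ≤ _ := Finset.card_le_card himg

lemma out_full {m : ℕ} (hm : 1 ≤ m) {W t : List (Fin q)} (hc : q ≤ outC m W t) :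
    ∀ c : Fin q, t ++ [c] ∈ wins m W := by
  have hinj : Function.Injective (fun c : Fin q => t ++ [c]) := by
    intro a b hab
    simpa using hab
  have hcard : (Finset.univ.image (fun c : Fin q => t ++ [c])).card ≤
      ((wins m W).toFinset.filter (fun x => x.take (m-1) = t)).card := by
    rw [Finset.card_image_of_injective _ hinj]
    simpa [outC] using hc
  have := Finset.eq_of_subset_of_card_le (out_filter_subset hm W t) hcard
  intro c
  have : t ++ [c] ∈ ((wins m W).toFinset.filter (fun x => x.take (m-1) = t)) := by
    rw [this]
    exact Finset.mem_image.2 ⟨c, Finset.mem_univ _, rfl⟩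
  exact List.mem_toFinset.1 (Finset.mem_filter.1 this).1


def pick (m : ℕ) (W : List (Fin q)) : Option (Fin q) :=
  (Finset.univ.filter fun a : Fin q => (a :: W).take m ∉ wins m W).max

lemma pick_eq_some {m : ℕ} {W : List (Fin q)} {a : Fin q} (h : pick m W = some a) :
    (a :: W).take m ∉ wins m W ∧ ∀ a', a < a' → (a' :: W).take m ∈ wins m W := by
  have ha := Finset.mem_of_max h
  rw [Finset.mem_filter] at ha
  refine ⟨ha.2, fun a' haa' => ?_⟩
  by_contra hmem
  have : (a' : WithBot (Fin q)) ≤ some a := h ▸ Finset.le_max (Finset.mem_filter.2 ⟨Finset.mem_univ _, hmem⟩)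
  exact absurd (WithBot.coe_le_coe.1 this) (not_le.2 haa')

lemma pick_eq_none {m : ℕ} {W : List (Fin q)} (h : pick m W = none) :
    ∀ a : Fin q, (a :: W).take m ∈ wins m W := by
  intro a
  by_contra hmem
  have := Finset.max_eq_bot.1 h
  rw [Finset.eq_empty_iff_forall_notMem] at this
  exact this a (Finset.mem_filter.2 ⟨Finset.mem_univ _, hmem⟩)

variable [NeZero q]

structure Inv (q m : ℕ) [NeZero q] (W : List (Fin q)) : Prop where
  hm : 1 ≤ m
  hlen : m ≤ W.length
  hsfx : replicate m (0:Fin q) <:+ W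
  nd : (wins m W).Nodup
  cls : ∀ (a : Fin q) (t : List (Fin q)), (a :: t) ∈ wins m W →
        (a :: t) ≠ replicate m (0:Fin q) →
        ∀ a' : Fin q, a < a' → (a' :: t) ∈ wins m W
  bal : ∀ t : List (Fin q),
    outC m W t + (if t = replicate (m-1) (0:Fin q) then 1 else 0)
    = inC m W t + (if t = W.take (m-1) then 1 else 0)

lemma wins_self {m : ℕ} {W : List (Fin q)} (h : W.length = m) : wins m W = [W] := by
  have h1 : W.length + 1 - m = 1 := by omega
  simp only [wins, h1, List.range_succ]
  simp [List.take_of_length_le (le_of_eq h)]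

lemma inv_init (m : ℕ) (hm : 1 ≤ m) : Inv q m (replicate m (0:Fin q)) := by
  have hw : wins m (replicate m (0:Fin q)) = [replicate m (0:Fin q)] :=
    wins_self (by simp)
  have htk : (replicate m (0:Fin q)).take (m-1) = replicate (m-1) (0:Fin q) := by
    rw [List.take_replicate]; congr 1; omega
  have hdr : (replicate m (0:Fin q)).drop 1 = replicate (m-1) (0:Fin q) := by
    rw [List.drop_replicate]
  refine ⟨hm, by simp, List.suffix_refl _, by rw [hw]; simp, ?_, ?_⟩
  · intro a t hat hne a' _
    rw [hw] at hat
    exact absurd (by simpa using hat) hne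
  · intro t
    simp only [outC, inC, hw, htk]
    by_cases ht : t = replicate (m-1) (0:Fin q) <;>
      simp [ht, Finset.filter_singleton, htk, hdr]

lemma inv_step {m : ℕ} {W : List (Fin q)} {a : Fin q} (inv : Inv q m W)
    (h : pick m W = some a) : Inv q m (a :: W) := by
  obtain ⟨hnew, hmax⟩ := pick_eq_some h
  have hwc : wins m (a :: W) = ((a :: W).take m) :: wins m W :=
    wins_cons a (by have := inv.hlen; omega)
  have hnewtake : (a :: W).take m = a :: W.take (m-1) := take_cons' inv.hm a W
  have hrepmem : replicate m (0:Fin q) ∈ wins m W :=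
    mem_wins.2 ⟨by simp, inv.hsfx.isInfix⟩
  have hl := inv.hlen
  refine ⟨inv.hm, by simp; omega, inv.hsfx.trans (List.suffix_cons a W), ?_, ?_, ?_⟩
  · rw [hwc]
    exact List.nodup_cons.2 ⟨hnew, inv.nd⟩
  · -- closure
    intro b t hbt hne a' hba'
    rw [hwc] at hbt ⊢
    rcases List.mem_cons.1 hbt with heq | hold
    · -- the new window
      rw [hnewtake] at heq
      injection heq.symm with h1 h2
      subst h1; subst h2
      right
      have hmm := hmax a' hba'
      rwa [take_cons' inv.hm] at hmm
    · right
      exact inv.cls b t hold (by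
        intro hcon
        exact hne hcon) a' hba'
  · -- balance
    intro t
    have hnotin : (a :: W).take m ∉ (wins m W).toFinset := by
      simpa using hnew
    have hto : (wins m (a :: W)).toFinset = insert ((a :: W).take m) (wins m W).toFinset := by
      rw [hwc]; simp
    have houtsplit : outC m (a :: W) t
        = outC m W t + (if t = (a :: W).take (m-1) then 1 else 0) := by
      unfold outC
      rw [hto, Finset.filter_insert]
      have htt : ((a :: W).take m).take (m-1) = (a :: W).take (m-1) := by
        rw [List.take_take]; congr 1; omega
      by_cases hcase : t = (a :: W).take (m-1)
      · rw [if_pos (by rw [htt, hcase]), Finset.card_insert_of_notMem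
          (fun hc => hnotin (Finset.mem_filter.1 hc).1), if_pos hcase]
      · rw [if_neg (by rw [htt]; exact fun hc => hcase hc.symm), if_neg hcase]
        omega
    have hinsplit : inC m (a :: W) t
        = inC m W t + (if t = W.take (m-1) then 1 else 0) := by
      unfold inC
      rw [hto, Finset.filter_insert]
      have htt : ((a :: W).take m).drop 1 = W.take (m-1) := by
        rw [List.drop_take]; rfl
      by_cases hcase : t = W.take (m-1)
      · rw [if_pos (by rw [htt, hcase]), Finset.card_insert_of_notMem
          (fun hc => hnotin (Finset.mem_filter.1 hc).1), if_pos hcase]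
      · rw [if_neg (by rw [htt]; exact fun hc => hcase hc.symm), if_neg hcase]
        omega
    rw [houtsplit, hinsplit]
    have hb := inv.bal t
    omega


def greedy (m : ℕ) : ℕ → List (Fin q) → List (Fin q)
  | 0, W => W
  | f+1, W =>
    match pick m W with
    | none => W
    | some a => greedy m f (a :: W)

lemma greedy_spec (m : ℕ) (f : ℕ) (W : List (Fin q)) (h : Inv q m W) :
    Inv q m (greedy m f W) ∧
      (pick m (greedy m f W) = none ∨ (greedy m f W).length = W.length + f) := by
  induction f generalizing W with
  | zero => exact ⟨h, Or.inr rfl⟩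
  | succ f ih =>
    rw [greedy]
    cases hp : pick m W with
    | none => exact ⟨h, Or.inl hp⟩
    | some a =>
      obtain ⟨h1, h2⟩ := ih (a :: W) (inv_step h hp)
      refine ⟨h1, ?_⟩
      rcases h2 with h2 | h2
      · exact Or.inl h2
      · right; rw [h2]; simp; omega

/-- Analysis of the stuck state: every m-word is a window. -/
lemma stuck_complete {m : ℕ} {W : List (Fin q)} (inv : Inv q m W)
    (hstuck : ∀ a : Fin q, (a :: W).take m ∈ wins m W) (hq : 1 ≤ q) :
    ∀ u : List (Fin q), u.length = m → u ∈ wins m W := by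
  have hm := inv.hm
  set p := W.take (m-1) with hp
  have hstuck' : ∀ a : Fin q, (a :: p) ∈ wins m W := by
    intro a
    have := hstuck a
    rwa [take_cons' inv.hm] at this
  -- Step A : p = replicate (m-1) 0
  have hpr : p = replicate (m-1) (0:Fin q) := by
    by_contra hne
    have h1 : q ≤ inC m W p := inC_ge W p hstuck'
    have h2 := inv.bal p
    have h3 : outC m W p ≤ q := outC_le inv.hm W p
    rw [if_neg hne, if_pos rfl] at h2
    omega
  -- Step B : outC = inC everywhere
  have hbal : ∀ t, outC m W t = inC m W t := by
    intro t
    have h2 := inv.bal t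
    rw [← hp, hpr] at h2
    omega
  -- Step C : single propagation step
  have hstep : ∀ v : List (Fin q), v.length = m → (0 :: v.take (m-1)) ∈ wins m W →
      v ∈ wins m W := by
    intro v hv hy
    set t := v.take (m-1) with ht
    have hall : ∀ a : Fin q, (a :: t) ∈ wins m W := by
      by_cases hcase : (0 : Fin q) :: t = replicate m (0:Fin q)
      · have : t = replicate (m-1) (0:Fin q) := by
          have : replicate m (0:Fin q) = 0 :: replicate (m-1) (0:Fin q) := by
            obtain ⟨k, rfl⟩ : ∃ k, m = k + 1 := ⟨m-1, by omega⟩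
            simp [List.replicate_succ]
          rw [this] at hcase
          injection hcase
        rw [this, ← hpr]
        exact hstuck'
      · intro a
        rcases eq_or_ne a 0 with rfl | ha
        · exact hy
        · exact inv.cls 0 t hy hcase a ((Fin.zero_le a).lt_of_ne (Ne.symm ha))
    have h1 : q ≤ inC m W t := inC_ge W t hall
    have h2 : q ≤ outC m W t := by rw [hbal]; exact h1
    have h3 := out_full inv.hm h2
    -- v = t ++ [last]
    obtain ⟨c, hc⟩ := List.length_eq_one_iff.1 (show (v.drop (m-1)).length = 1 by
      rw [List.length_drop, hv]; omega)
    have : v = t ++ [c] := by rw [ht, ← hc, List.take_append_drop]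
    rw [this]
    exact h3 c
  -- Step D : iterate
  intro u hu
  by_contra hmem
  have key : ∀ k, k ≤ m → (replicate k (0:Fin q) ++ u.take (m - k)) ∉ wins m W := by
    intro k
    induction k with
    | zero =>
      intro _
      simpa [List.take_of_length_le (le_of_eq hu)] using hmem
    | succ k ihk =>
      intro hkm
      have hk := ihk (by omega)
      intro hmem'
      apply hk
      apply hstep
      · rw [List.length_append, List.length_replicate, List.length_take]
        omega
      · have htake : (replicate k (0:Fin q) ++ u.take (m - k)).take (m-1)
            = replicate k (0:Fin q) ++ u.take (m - (k+1)) := by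
          rw [List.take_append, List.take_replicate,
            List.take_take, List.length_replicate]
          congr 2
          · omega
          · omega
        rw [htake]
        have : (0:Fin q) :: (replicate k (0:Fin q) ++ u.take (m - (k+1)))
            = replicate (k+1) (0:Fin q) ++ u.take (m - (k+1)) := by
          simp [List.replicate_succ]
        rw [this]
        exact hmem'
  have := key m le_rfl
  simp only [Nat.sub_self, List.take_zero, List.append_nil] at this
  exact this (mem_wins.2 ⟨by simp, inv.hsfx.isInfix⟩)

/-- Existence of de Bruijn words. -/
theorem deBruijn (hq : 1 ≤ q) (m : ℕ) (hm : 1 ≤ m) :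
    ∃ W : List (Fin q), W.length = q ^ m + m - 1 ∧ (wins m W).Nodup ∧
      ∀ u : List (Fin q), u.length = m → u ∈ wins m W := by
  obtain ⟨inv, hor⟩ := greedy_spec m (q ^ m) (replicate m (0:Fin q)) (inv_init m hm)
  set R := greedy m (q ^ m) (replicate m (0:Fin q)) with hR
  have hstuck : pick m R = none := by
    rcases hor with h | h
    · exact h
    · exfalso
      have h1 : (wins m R).length ≤ q ^ m := nodup_wins_length_le inv.nd
      rw [wins_length, h, List.length_replicate] at h1
      have := inv.hm
      omega
  have hcomp := stuck_complete inv (pick_eq_none hstuck) hq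
  refine ⟨R, ?_, inv.nd, hcomp⟩
  -- length computation
  have hsub : (wins m R).toFinset = (allW q m).toFinset := by
    apply Finset.Subset.antisymm
    · intro x hx
      rw [List.mem_toFinset] at *
      exact mem_allW.2 (length_of_mem_wins hx)
    · intro x hx
      rw [List.mem_toFinset] at *
      exact hcomp x (mem_allW.1 hx)
  have h1 : (wins m R).length = q ^ m := by
    rw [← List.toFinset_card_of_nodup inv.nd, hsub,
      List.toFinset_card_of_nodup (allW_nodup m), allW_length]
  rw [wins_length] at h1
  have := inv.hlen
  omega


lemma overlap_iff {n : ℕ} (hn : 1 ≤ n) {u v : List (Fin q)} (hu : u.length = n)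
    (hv : v.length = n) : Overlap u v ↔ u.drop 1 = v.take (n-1) := by
  constructor
  · rintro ⟨a, b, w, rfl, rfl⟩
    have hw : w.length = n - 1 := by simp at hu; omega
    rw [List.drop_one, List.tail_cons, List.take_left' hw]
  · intro h
    have hune : u ≠ [] := by intro hc; rw [hc] at hu; simp at hu; omega
    have hvne : v ≠ [] := by intro hc; rw [hc] at hv; simp at hv; omega
    refine ⟨u.head hune, v.getLast hvne, u.drop 1, ?_, ?_⟩
    · rw [List.drop_one, List.cons_head_tail]
    · rw [h]
      have hn1 : n - 1 = v.length - 1 := by omega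
      rw [hn1, ← List.dropLast_eq_take, List.dropLast_append_getLast]

/-- Upper bound for C. -/
lemma C_upper {n : ℕ} (hn : 1 ≤ n) {k : ℕ} (v : Fin k → List (Fin q))
    (hlen : ∀ i, (v i).length = n) (hinj : Function.Injective v)
    (harc : ∀ i : Fin k, ∀ h : (i : ℕ) + 1 < k, Overlap (v i) (v ⟨(i : ℕ) + 1, h⟩))
    (hnb : ∀ i j : Fin k, i ≤ j → ¬ Overlap (v j) (v i)) :
    k ≤ q ^ (n-1) - 1 := by
  rcases Nat.eq_zero_or_pos k with rfl | hk
  · omega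
  -- the chain of (n-1)-prefixes together with the final suffix
  set c : Fin (k+1) → List (Fin q) := fun i =>
    if h : (i : ℕ) < k then (v ⟨i, h⟩).take (n-1) else (v ⟨k-1, by omega⟩).drop 1 with hc
  have hcsucc : ∀ (j : ℕ) (h : j < k), c ⟨j+1, by omega⟩ = (v ⟨j, h⟩).drop 1 := by
    intro j h
    rcases Nat.lt_or_ge (j+1) k with h2 | h2
    · have := harc ⟨j, h⟩ (by simpa using h2)
      rw [overlap_iff hn (hlen _) (hlen _)] at this
      simp only [hc, dif_pos h2]
      exact this.symm
    · have hjk : j = k - 1 := by omega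
      subst hjk
      simp only [hc]
      rw [dif_neg (by simp; omega)]
  have hcinj : Function.Injective c := by
    intro i j hij
    by_contra hne
    -- wlog i < j
    wlog hlt : (i : ℕ) < (j : ℕ) generalizing i j
    · exact this hij.symm (fun h => hne h.symm) (by
        rcases Nat.lt_trichotomy (i : ℕ) (j : ℕ) with h | h | h
        · exact absurd h hlt
        · exact absurd (Fin.ext h) hne
        · exact h)
    have hj1 : (j : ℕ) - 1 < k := by omega
    have hcj : c j = (v ⟨(j : ℕ) - 1, hj1⟩).drop 1 := by
      have heq : (⟨((j : ℕ) - 1) + 1, by omega⟩ : Fin (k+1)) = j := by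
        apply Fin.ext; simp; omega
      have := hcsucc ((j : ℕ) - 1) hj1
      rwa [heq] at this
    have hik : (i : ℕ) < k := by omega
    have hci : c i = (v ⟨i, hik⟩).take (n-1) := by simp only [hc, dif_pos hik]
    have hov : Overlap (v ⟨(j : ℕ) - 1, hj1⟩) (v ⟨i, hik⟩) := by
      rw [overlap_iff hn (hlen _) (hlen _), ← hcj, ← hci, hij]
    exact hnb ⟨i, hik⟩ ⟨(j:ℕ)-1, hj1⟩ (by simp [Fin.le_def]; omega) hov
  have hcmem : ∀ i, c i ∈ (allW q (n-1)).toFinset := by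
    intro i
    rw [List.mem_toFinset, mem_allW]
    simp only [hc]
    split <;> (simp only [List.length_take, List.length_drop, hlen]; try omega)
  have hcard : k + 1 ≤ q ^ (n-1) := by
    have h1 : (Finset.univ.image c).card = k + 1 := by
      rw [Finset.card_image_of_injective _ hcinj, Finset.card_univ, Fintype.card_fin]
    have h2 : (Finset.univ.image c) ⊆ (allW q (n-1)).toFinset := by
      intro x hx
      obtain ⟨i, -, rfl⟩ := Finset.mem_image.1 hx
      exact hcmem i
    have := Finset.card_le_card h2
    rw [h1, List.toFinset_card_of_nodup (allW_nodup _), allW_length] at this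
    exact this
  omega

/-- The path from a de Bruijn word: C membership. -/
lemma C_mem {n m : ℕ} (hn : 1 ≤ n) (hm : m = n - 1) {W : List (Fin q)}
    (hW : W.length = q ^ m + m - 1) (hnd : (wins m W).Nodup) (hq : 1 ≤ q) :
    ∃ v : Fin (q ^ (n-1) - 1) → List (Fin q),
      (∀ i, (v i).length = n) ∧ Function.Injective v ∧
      (∀ i : Fin (q ^ (n-1) - 1), ∀ h : (i : ℕ) + 1 < q ^ (n-1) - 1,
        Overlap (v i) (v ⟨(i : ℕ) + 1, h⟩)) ∧
      (∀ i j : Fin (q ^ (n-1) - 1), i ≤ j → ¬ Overlap (v j) (v i)) := by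
  subst hm
  have hq1 : 1 ≤ q ^ (n-1) := Nat.one_le_pow _ _ hq
  have hWlen : W.length = q ^ (n-1) + n - 2 := by omega
  have hwmlen : (wins (n-1) W).length = q ^ (n-1) := by rw [wins_length]; omega
  have hvlen : ∀ i : Fin (q ^ (n-1) - 1), ((W.drop (i : ℕ)).take n).length = n := by
    intro i
    have := i.isLt
    rw [List.length_take, List.length_drop]
    omega
  refine ⟨fun i => (W.drop (i : ℕ)).take n, hvlen, ?_, ?_, ?_⟩
  · intro i j hij
    replace hij : (W.drop (i : ℕ)).take n = (W.drop (j : ℕ)).take n := hij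
    have hi := i.isLt; have hj := j.isLt
    have h1 : ∀ t : Fin (q ^ (n-1) - 1), ((W.drop (t : ℕ)).take n).take (n-1)
        = (wins (n-1) W)[(t : ℕ)]'(by rw [hwmlen]; exact lt_of_lt_of_le t.isLt (by omega)) := by
      intro t
      rw [wins_getElem, List.take_take]
      congr 1
      omega
    have h2 : (wins (n-1) W)[(i : ℕ)]'(by rw [hwmlen]; omega)
        = (wins (n-1) W)[(j : ℕ)]'(by rw [hwmlen]; omega) := by
      rw [← h1 i, ← h1 j, hij]
    exact Fin.ext (hnd.getElem_inj_iff.1 h2)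
  · intro i h
    have hi := i.isLt
    rw [overlap_iff hn (hvlen i) (hvlen ⟨(i:ℕ)+1, h⟩)]
    show ((W.drop (i:ℕ)).take n).drop 1 = ((W.drop ((i:ℕ)+1)).take n).take (n-1)
    rw [List.drop_take, List.take_take, List.drop_drop]
    congr 1
    omega
  · intro i j hij hov
    have hi := i.isLt; have hj := j.isLt
    rw [overlap_iff hn (hvlen j) (hvlen i)] at hov
    replace hov : ((W.drop (j:ℕ)).take n).drop 1 = ((W.drop (i:ℕ)).take n).take (n-1) := hov
    rw [List.drop_take, List.drop_drop, List.take_take] at hov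
    have h2 : (wins (n-1) W)[(j : ℕ) + 1]'(by rw [hwmlen]; omega)
        = (wins (n-1) W)[(i : ℕ)]'(by rw [hwmlen]; omega) := by
      rw [wins_getElem, wins_getElem]
      rw [hov]
      congr 1
      omega
    have := hnd.getElem_inj_iff.1 h2
    rw [Fin.le_def] at hij
    omega


lemma infix_iff_drop_take {α : Type*} {x X : List α} :
    x <:+: X ↔ ∃ p, p + x.length ≤ X.length ∧ x = (X.drop p).take x.length := by
  constructor
  · rintro ⟨s, t, rfl⟩
    refine ⟨s.length, by simp, ?_⟩
    rw [List.append_assoc, List.drop_left, List.take_left]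
  · rintro ⟨p, hp, hx⟩
    rw [hx]
    exact ((X.drop p).take_prefix _).isInfix.trans (X.drop_suffix p).isInfix

lemma drop_take_infix {α : Type*} (X : List α) (p n : ℕ) : (X.drop p).take n <:+: X :=
  ((X.drop p).take_prefix _).isInfix.trans (X.drop_suffix p).isInfix

/-- length bound for words whose n-windows all appear among the n-windows
of a de Bruijn word W -/
lemma free_len_le {n : ℕ} (hn : 1 ≤ n) {W w : List (Fin q)} (hq : 1 ≤ q)
    (hW : W.length = q ^ (n-1) + n - 2) (hnd : (wins (n-1) W).Nodup)
    (hfree : ∀ u : List (Fin q), u.length = n → u <:+: w → u ∈ wins n W) :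
    w.length ≤ W.length := by
  have hq1 : 1 ≤ q ^ (n-1) := Nat.one_le_pow _ _ hq
  have hwm : (wins (n-1) W).length = q ^ (n-1) := by rw [wins_length]; omega
  have hwn : (wins n W).length = q ^ (n-1) - 1 := by rw [wins_length]; omega
  rcases Nat.lt_or_ge w.length n with h | h
  · omega
  have hNval : (wins n w).length = w.length + 1 - n := wins_length
  set g : ℕ → ℕ := fun p => List.idxOf ((wins n w).getD p []) (wins n W) with hg
  have hgetD : ∀ p (hp : p < (wins n w).length), (wins n w).getD p [] = (w.drop p).take n := by
    intro p hp
    rw [List.getD_eq_getElem _ _ hp, wins_getElem hp]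
  have hmemW : ∀ p (hp : p < (wins n w).length), (wins n w).getD p [] ∈ wins n W := by
    intro p hp
    rw [List.getD_eq_getElem _ _ hp]
    obtain ⟨h2, h3⟩ := mem_wins.1 (List.getElem_mem hp)
    exact hfree _ h2 h3
  have hglt : ∀ p (hp : p < (wins n w).length), g p < (wins n W).length := by
    intro p hp
    simp only [hg]
    exact List.idxOf_lt_length_iff.2 (hmemW p hp)
  have hgx : ∀ p (hp : p < (wins n w).length),
      (wins n W)[g p]'(hglt p hp) = (wins n w).getD p [] := by
    intro p hp
    simp only [hg]
    exact List.getElem_idxOf _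
  have hstep : ∀ p (hp1 : p + 1 < (wins n w).length), g (p+1) = g p + 1 := by
    intro p hp1
    have hp : p < (wins n w).length := by omega
    have hgpn : g p < q ^ (n-1) - 1 := by rw [← hwn]; exact hglt p hp
    have hgpn1 : g (p+1) < q ^ (n-1) - 1 := by rw [← hwn]; exact hglt _ hp1
    -- overlap within w
    have hxy : ((wins n w).getD p []).drop 1 = ((wins n w).getD (p+1) []).take (n-1) := by
      rw [hgetD p hp, hgetD (p+1) hp1]
      rw [List.drop_take, List.take_take, List.drop_drop]
      try congr 1
      all_goals omega
    have hxW : ((wins n w).getD p []).drop 1 = (W.drop (g p + 1)).take (n-1) := by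
      rw [← hgx p hp, wins_getElem (hglt p hp), List.drop_take, List.drop_drop]
      try congr 1
      all_goals omega
    have hyW : ((wins n w).getD (p+1) []).take (n-1) = (W.drop (g (p+1))).take (n-1) := by
      rw [← hgx (p+1) hp1, wins_getElem (hglt _ hp1), List.take_take]
      try congr 1
      all_goals omega
    have hkey : (wins (n-1) W)[g (p+1)]'(by omega)
        = (wins (n-1) W)[g p + 1]'(by omega) := by
      rw [wins_getElem (i := g (p+1)) (by omega), wins_getElem (i := g p + 1) (by omega),
        ← hyW, ← hxy, hxW]
    have := hnd.getElem_inj_iff.1 hkey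
    omega
  have hlin : ∀ p (hp : p < (wins n w).length), g p = g 0 + p := by
    intro p
    induction p with
    | zero => intro hp; omega
    | succ p ih =>
      intro hp
      rw [hstep p hp, ih (by omega)]
      omega
  have hNpos : 1 ≤ (wins n w).length := by omega
  have hfin := hglt ((wins n w).length - 1) (by omega)
  rw [hlin ((wins n w).length - 1) (by omega)] at hfin
  omega


/-- B^j ++ C -/
def rep {α : Type*} (B C : List α) : ℕ → List α
  | 0 => C
  | j+1 => B ++ rep B C j

lemma rep_length {α : Type*} (B C : List α) (j : ℕ) :
    (rep B C j).length = j * B.length + C.length := by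
  induction j with
  | zero => simp [rep]
  | succ j ih => simp [rep, ih]; ring

lemma exists_dup {l : List (List (Fin q))} (h : ¬ l.Nodup) :
    ∃ (p1 p2 : ℕ) (h1 : p1 < p2) (h2 : p2 < l.length), l[p1]'(by omega) = l[p2] := by
  rw [List.nodup_iff_injective_get] at h
  obtain ⟨a, b, hab, hne⟩ := Function.not_injective_iff.1 h
  rcases Nat.lt_or_ge (a : ℕ) (b : ℕ) with hlt | hge
  · exact ⟨a, b, hlt, b.isLt, by simpa [List.get_eq_getElem] using hab⟩
  · have : (b : ℕ) < (a : ℕ) := by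
      rcases Nat.lt_or_ge (b : ℕ) (a : ℕ) with h | h
      · exact h
      · exact absurd (Fin.ext (by omega)) hne
    exact ⟨b, a, this, a.isLt, by simpa [List.get_eq_getElem] using hab.symm⟩

/-- The pumping bound: any S-free word for an unavoidable set of n-words is short. -/
lemma L_upper {n : ℕ} (hn : 1 ≤ n) (hq : 1 ≤ q) {S : Set (List (Fin q))}
    (hS : ∀ s ∈ S, s.length = n) (hunav : UnavoidableW S)
    {w : List (Fin q)} (hfree : ∀ s ∈ S, ¬ s <:+: w) :
    w.length ≤ q ^ (n-1) + n - 2 := by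
  by_contra hcon
  push_neg at hcon
  have hq1 : 1 ≤ q ^ (n-1) := Nat.one_le_pow _ _ hq
  have hlw : q ^ (n-1) + n - 1 ≤ w.length := by omega
  have hnd : ¬ (wins (n-1) w).Nodup := by
    intro hnd
    have := nodup_wins_length_le hnd
    rw [wins_length] at this
    omega
  obtain ⟨p1, p2, hlt, hp2, hdup⟩ := exists_dup hnd
  rw [wins_getElem, wins_getElem] at hdup
  rw [wins_length] at hp2
  have hp2w : p2 + (n-1) ≤ w.length := by omega
  set m := n - 1 with hm
  set u : List (Fin q) := (w.drop p1).take m with hu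
  have hu2 : (w.drop p2).take m = u := hdup.symm
  set d := p2 - p1 with hd
  have hd1 : 1 ≤ d := by omega
  set A := w.take p1 with hA
  set B := (w.drop p1).take d with hB
  set C := w.drop p2 with hC
  have hdd : (w.drop p1).drop d = w.drop p2 := by
    rw [List.drop_drop]
    congr 1
    omega
  have hBC : B ++ C = w.drop p1 := by
    rw [hB, hC, ← hdd, List.take_append_drop]
  have hw : A ++ (B ++ C) = w := by rw [hBC, hA, List.take_append_drop]
  have hlenB : B.length = d := by
    rw [hB, List.length_take, List.length_drop]; omega
  have hlenu : u.length = m := by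
    rw [hu, List.length_take, List.length_drop]; omega
  have hCu : C.take m = u := hu2
  have huBC : (B ++ C).take m = u := by rw [hBC]
  have hper : u.drop d = u.take (m - d) := by
    have e1 : u.drop d = (w.drop p2).take (m - d) := by
      rw [hu, List.drop_take, hdd]
    have e2 : u.take (m - d) = (w.drop p2).take (m - d) := by
      rw [← hu2, List.take_take]
      congr 1
      omega
    rw [e1, e2]
  -- u is a prefix of every rep B C j
  have hupref : ∀ j, u <+: rep B C j := by
    intro j
    induction j with
    | zero =>
      rw [List.prefix_iff_eq_take, hlenu, ← hCu]
      rfl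
    | succ j ih =>
      show u <+: B ++ rep B C j
      rcases le_or_gt m d with hcase | hcase
      · -- u is a prefix of B
        have hub : u = B.take m := by
          rw [← huBC, List.take_append, hlenB,
            show m - d = 0 by omega]
          simp
        rw [hub]
        exact (B.take_prefix m).trans (B.prefix_append _)
      · -- u = B ++ u.take (m - d)
        have hud : u.take d = B := by
          rw [← huBC, List.take_take, show d ⊓ m = d by omega,
            List.take_append, List.take_of_length_le (le_of_eq hlenB),
            show d - B.length = 0 by rw [hlenB]; exact Nat.sub_self d]
          simp
        obtain ⟨t2, ht2⟩ := ((u.take_prefix (m - d)).trans ih : u.take (m-d) <+: rep B C j)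
        refine ⟨t2, ?_⟩
        rw [← ht2, ← hper, ← hud, ← List.append_assoc, List.take_append_drop]
  -- pump-down
  have hpump : ∀ (j : ℕ) (s : List (Fin q)), s.length = n →
      s <:+: A ++ rep B C (j+2) → s <:+: A ++ rep B C (j+1) := by
    intro j s hs hsin
    obtain ⟨p, hp, hsval⟩ := infix_iff_drop_take.1 hsin
    rw [hs] at hsval
    rcases le_or_gt (p + n) (A.length + d + m) with hcase | hcase
    · have hstep1 : s <:+: (A ++ rep B C (j+2)).take (A.length + d + m) := by
        rw [hsval]
        have heq : (((A ++ rep B C (j+2)).take (A.length + d + m)).drop p).take n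
            = ((A ++ rep B C (j+2)).drop p).take n := by
          rw [List.drop_take, List.take_take]
          congr 1
          omega
        rw [← heq]
        exact drop_take_infix _ _ _
      have hXtake : (A ++ rep B C (j+2)).take (A.length + d + m) = A ++ (B ++ u) := by
        rw [List.take_append,
          List.take_of_length_le (by omega : A.length ≤ A.length + d + m)]
        congr 1
        show (B ++ rep B C (j+1)).take (A.length + d + m - A.length) = B ++ u
        rw [show A.length + d + m - A.length = d + m by omega,
          List.take_append, hlenB,
          List.take_of_length_le (by omega : B.length ≤ d + m)]
        congr 1
        rw [show d + m - d = m by omega, ← hlenu]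
        exact (List.prefix_iff_eq_take.1 (hupref (j+1))).symm
      have hinfix2 : A ++ (B ++ u) <+: A ++ rep B C (j+1) := by
        obtain ⟨t, ht⟩ := hupref j
        refine ⟨t, ?_⟩
        show A ++ (B ++ u) ++ t = A ++ rep B C (j+1)
        rw [show rep B C (j+1) = B ++ rep B C j from rfl, ← ht]
        simp [List.append_assoc]
      rw [hXtake] at hstep1
      exact hstep1.trans hinfix2.isInfix
    · have hXdrop : (A ++ rep B C (j+2)).drop (A.length + d) = rep B C (j+1) := by
        rw [show rep B C (j+2) = B ++ rep B C (j+1) from rfl, ← List.append_assoc,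
          List.drop_left' (by rw [List.length_append, hlenB])]
      have hin2 : s <:+: (A ++ rep B C (j+2)).drop (A.length + d) := by
        rw [hsval, show p = (A.length + d) + (p - A.length - d) by omega, ← List.drop_drop]
        exact drop_take_infix _ _ _
      rw [hXdrop] at hin2
      exact hin2.trans (List.suffix_append A _).isInfix
  -- all pumped words are S-free
  have hSfree : ∀ j : ℕ, (A ++ rep B C (j+1)) ∈ {v : List (Fin q) | ∀ s ∈ S, ¬ s <:+: v} := by
    intro j
    induction j with
    | zero =>
      intro s hsS
      rw [show rep B C 1 = B ++ rep B C 0 from rfl, show rep B C 0 = C from rfl, hw]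
      exact hfree s hsS
    | succ j ih =>
      intro s hsS hinf
      exact ih s hsS (hpump j s (hS s hsS) hinf)
  have hinj : Function.Injective (fun j : ℕ => A ++ rep B C (j+1)) := by
    intro a b hab
    replace hab : A ++ rep B C (a+1) = A ++ rep B C (b+1) := hab
    have : (A ++ rep B C (a+1)).length = (A ++ rep B C (b+1)).length := by rw [hab]
    rw [List.length_append, List.length_append, rep_length, rep_length, hlenB] at this
    have : (a+1) * d = (b+1) * d := by omega
    have := Nat.eq_of_mul_eq_mul_right (by omega : 0 < d) this
    omega
  exact (Set.infinite_of_injective_forall_mem hinj hSfree) hunav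


/-- de Bruijn including order 0. -/
theorem deBruijn' (hq : 1 ≤ q) (m : ℕ) :
    ∃ W : List (Fin q), W.length = q ^ m + m - 1 ∧ (wins m W).Nodup ∧
      ∀ u : List (Fin q), u.length = m → u ∈ wins m W := by
  rcases Nat.eq_zero_or_pos m with rfl | hm
  · refine ⟨[], by simp, ?_, ?_⟩
    · show (wins 0 ([] : List (Fin q))).Nodup
      simp [wins]
    · intro u hu
      rw [List.length_eq_zero_iff] at hu
      subst hu
      simp [wins]
  · exact deBruijn hq m hm

lemma L_mem {n : ℕ} (hn : 1 ≤ n) (hq : 1 ≤ q) {W : List (Fin q)}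
    (hW : W.length = q ^ (n-1) + n - 2) (hnd : (wins (n-1) W).Nodup) :
    ∃ S : Set (List (Fin q)), (∀ s ∈ S, s.length = n) ∧
      UnavoidableW S ∧ (∀ s ∈ S, ¬ s <:+: W) ∧ W.length = q ^ (n-1) + n - 2 := by
  refine ⟨{s | s.length = n ∧ s ∉ wins n W}, fun s hs => hs.1, ?_, ?_, hW⟩
  · apply (List.finite_length_le (Fin q) W.length).subset
    intro v hv
    simp only [Set.mem_setOf_eq] at hv ⊢
    apply free_len_le hn hq hW hnd
    intro u hul huv
    by_contra humem
    exact hv u ⟨hul, humem⟩ huv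
  · rintro s ⟨hsl, hsw⟩ hinf
    exact hsw (mem_wins.2 ⟨hsl, hinf⟩)

end DB

theorem stmt_1 (q n : ℕ) (hq : 2 ≤ q) (hn : 1 ≤ n) :
    ∃ C : ℕ,
      -- C = C_w(n): the greatest number of vertices of a chord-free simple path
      -- in the de Bruijn graph G_n that passes through no vertex having a loop
      IsGreatest {k : ℕ | ∃ v : Fin k → List (Fin q),
        (∀ i, (v i).length = n) ∧ Function.Injective v ∧
        (∀ i : Fin k, ∀ h : (i : ℕ) + 1 < k, Overlap (v i) (v ⟨(i : ℕ) + 1, h⟩)) ∧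
        (∀ i j : Fin k, i ≤ j → ¬ Overlap (v j) (v i))} C ∧
      -- L_w(n) = C + n - 1, where L_w(n) is the maximum over unavoidable S ⊆ A^n
      -- of the maximum length of an S-free word
      IsGreatest {ℓ : ℕ | ∃ S : Set (List (Fin q)), (∀ s ∈ S, s.length = n) ∧
        UnavoidableW S ∧ ∃ w : List (Fin q), (∀ s ∈ S, ¬ s <:+: w) ∧ w.length = ℓ}
        (C + n - 1) ∧
      C + n - 1 = q ^ (n - 1) + n - 2 := by
  have hq1 : 1 ≤ q := by omega
  haveI : NeZero q := ⟨by omega⟩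
  have hqp : 1 ≤ q ^ (n-1) := Nat.one_le_pow _ _ hq1
  obtain ⟨W, hWlen, hWnd, hWcomp⟩ := DB.deBruijn' hq1 (n-1)
  have hWlen' : W.length = q ^ (n-1) + n - 2 := by omega
  refine ⟨q ^ (n-1) - 1, ⟨?_, ?_⟩, ⟨?_, ?_⟩, by omega⟩
  · -- C membership
    obtain ⟨v, h1, h2, h3, h4⟩ := DB.C_mem hn rfl hWlen hWnd hq1
    exact ⟨v, h1, h2, h3, h4⟩
  · -- C upper bound
    rintro k ⟨v, h1, h2, h3, h4⟩
    exact DB.C_upper hn v h1 h2 h3 h4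
  · -- L membership
    obtain ⟨S, hS1, hS2, hS3, hS4⟩ := DB.L_mem hn hq1 hWlen' hWnd
    exact ⟨S, hS1, hS2, W, hS3, by omega⟩
  · -- L upper bound
    rintro ℓ ⟨S, hS1, hS2, w, hw1, hw2⟩
    have := DB.L_upper hn hq1 hS1 hS2 hw1
    omega
end

section
/- As n → ∞, n · M_w(n) / q^n tends to 1; that is, M_w(n) is asymptotic to q^n / n. -/
open Finset Filter

namespace UnavoidHelp

/-- base-q value of a word (little endian) -/
def val (q : ℕ) : List (Fin q) → ℕ
  | [] => 0
  | a :: t => a.val + q * val q t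

theorem val_lt (q : ℕ) (hq : 1 ≤ q) (u : List (Fin q)) : val q u < q ^ u.length := by
  induction u with
  | nil => simpa [val] using hq
  | cons a t ih =>
    have ha : a.val + 1 ≤ q := a.isLt
    calc val q (a :: t) = a.val + q * val q t := rfl
    _ < q * (val q t + 1) := by nlinarith
    _ ≤ q * q ^ t.length := by
        have : val q t + 1 ≤ q ^ t.length := ih
        exact Nat.mul_le_mul_left q this
    _ = q ^ (a :: t).length := by rw [List.length_cons]; ring

theorem val_inj (q : ℕ) (hq : 1 ≤ q) : ∀ (u v : List (Fin q)), u.length = v.length →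
    val q u = val q v → u = v := by
  intro u
  induction u with
  | nil => intro v h _; exact (List.length_eq_zero_iff.mp h.symm).symm ▸ rfl
  | cons a t ih =>
    intro v h hv
    match v with
    | [] => simp at h
    | b :: s =>
      have hlen : t.length = s.length := by simpa using h
      have h1 : a.val + q * val q t = b.val + q * val q s := hv
      have ha : a.val < q := a.isLt
      have hb : b.val < q := b.isLt
      have hmod : a.val = b.val := by
        have := congrArg (· % q) h1
        simpa [Nat.add_mul_mod_self_left, Nat.mod_eq_of_lt ha, Nat.mod_eq_of_lt hb] using this
      have hdiv : val q t = val q s := by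
        have h2 : q * val q t = q * val q s := by omega
        exact Nat.eq_of_mul_eq_mul_left (by omega) h2
      have : a = b := Fin.ext hmod
      rw [this, ih s hlen hdiv]

/-- the finset of all words of length k -/
def WF (q k : ℕ) : Finset (List (Fin q)) :=
  (Finset.univ : Finset (Fin k → Fin q)).image List.ofFn

theorem mem_WF {q k : ℕ} {w : List (Fin q)} : w ∈ WF q k ↔ w.length = k := by
  constructor
  · intro h
    obtain ⟨f, _, rfl⟩ := Finset.mem_image.mp h
    simp
  · intro h
    refine Finset.mem_image.mpr ⟨fun i => w.get (Fin.cast h.symm i), Finset.mem_univ _, ?_⟩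
    subst h
    exact List.ofFn_get w

theorem card_WF (q k : ℕ) : (WF q k).card = q ^ k := by
  rw [WF, Finset.card_image_of_injective _ List.ofFn_injective]
  simp

/-- factor value function: value of the length-m factor of x at position p -/
def G (q m : ℕ) (x : List (Fin q)) (p : ℕ) : ℕ := val q ((x.drop p).take m)

theorem fc_window (q n m : ℕ) (x : List (Fin q)) (j t : ℕ) (hjn : j + n ≤ x.length)
    (ht : t + m ≤ n) : (((x.drop j).take n).drop t).take m = (x.drop (j + t)).take m := by
  rw [List.drop_take, List.take_take, List.drop_drop]
  congr 1
  omega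

theorem G_window (q n m : ℕ) (x : List (Fin q)) (j t : ℕ) (hjn : j + n ≤ x.length)
    (ht : t + m ≤ n) : G q m ((x.drop j).take n) t = G q m x (j + t) := by
  unfold G
  rw [fc_window q n m x j t hjn ht]

theorem G_lt (q m : ℕ) (hq : 1 ≤ q) (x : List (Fin q)) (p : ℕ) (hp : p + m ≤ x.length) :
    G q m x p < q ^ m := by
  have hlen : ((x.drop p).take m).length = m := by
    rw [List.length_take, List.length_drop]
    omega
  have := val_lt q hq ((x.drop p).take m)
  rwa [hlen] at this

theorem G_len (q m : ℕ) (x : List (Fin q)) (p : ℕ) (hp : p + m ≤ x.length) :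
    ((x.drop p).take m).length = m := by
  rw [List.length_take, List.length_drop]; omega

theorem window_infix (q n : ℕ) (x : List (Fin q)) (j : ℕ) :
    (x.drop j).take n <:+: x :=
  (List.take_prefix n (x.drop j)).isInfix.trans (List.drop_suffix j x).isInfix

theorem window_mem_WF (q n : ℕ) (x : List (Fin q)) (j : ℕ) (hjn : j + n ≤ x.length) :
    (x.drop j).take n ∈ WF q n := by
  rw [mem_WF, List.length_take, List.length_drop]
  omega


/-- predicate: position p is a global minimum of factor values of w -/
def IsMin (q m : ℕ) (w : List (Fin q)) (p : ℕ) : Prop :=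
  p + m ≤ w.length ∧ ∀ t, t + m ≤ w.length → G q m w p ≤ G q m w t

theorem lam_exists (q m : ℕ) (w : List (Fin q)) (hmw : m ≤ w.length) :
    ∃ p, IsMin q m w p := by
  have hne : ((Finset.range (w.length + 1)).filter (fun p => p + m ≤ w.length)).Nonempty := by
    refine ⟨0, Finset.mem_filter.mpr ⟨Finset.mem_range.mpr ?_, by omega⟩⟩
    omega
  obtain ⟨p, hp, hmin⟩ := Finset.exists_min_image _ (G q m w) hne
  rw [Finset.mem_filter] at hp
  refine ⟨p, hp.2, fun t ht => ?_⟩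
  exact hmin t (Finset.mem_filter.mpr ⟨Finset.mem_range.mpr (by omega), ht⟩)

open Classical in
/-- leftmost global-argmin of factor values -/
noncomputable def lam (q m : ℕ) (w : List (Fin q)) : ℕ :=
  if h : ∃ p, IsMin q m w p then Nat.find h else 0

open Classical in
theorem lam_eq_iff (q m : ℕ) {w : List (Fin q)} (hmw : m ≤ w.length) {r : ℕ} :
    lam q m w = r ↔ IsMin q m w r ∧ ∀ k < r, ¬ IsMin q m w k := by
  rw [lam, dif_pos (lam_exists q m w hmw)]
  exact Nat.find_eq_iff _

theorem lam_spec (q m : ℕ) {w : List (Fin q)} (hmw : m ≤ w.length) :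
    IsMin q m w (lam q m w) :=
  ((lam_eq_iff q m hmw).mp rfl).1

/-- tie: two equal factor values at distinct valid positions -/
def Tie (q m : ℕ) (w : List (Fin q)) : Prop :=
  ∃ t1 t2, t1 < t2 ∧ t2 + m ≤ w.length ∧ G q m w t1 = G q m w t2

open Classical in
/-- the unavoidable set: words of length n whose leftmost argmin is r, or with a tie -/
noncomputable def SS (q n m r : ℕ) : Finset (List (Fin q)) :=
  (WF q n).filter (fun w => lam q m w = r ∨ Tie q m w)


theorem window_len (q n : ℕ) (x : List (Fin q)) (j : ℕ) (hjn : j + n ≤ x.length) :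
    ((x.drop j).take n).length = n := by
  rw [List.length_take, List.length_drop]; omega

theorem find_in_SS (q n m r : ℕ) (hq : 1 ≤ q) (hmn : m ≤ n) (hrm : r + m ≤ n) :
    ∀ b (x : List (Fin q)),
      (∀ p, p + m ≤ x.length → q ^ m ≤ b + G q m x p) →
      2 * n + (n + 1) * b ≤ x.length →
      ∃ s ∈ SS q n m r, s <:+: x := by
  intro b
  induction b with
  | zero =>
    intro x hval hlen
    exfalso
    have h0 : 0 + m ≤ x.length := by omega
    have h1 := hval 0 h0
    have h2 := G_lt q m hq x 0 h0
    omega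
  | succ b ih =>
    intro x hval hlen
    set L := x.length with hLdef
    obtain ⟨omin, homin1, homin2⟩ : ∃ p, IsMin q m x p := lam_exists q m x (by omega)
    set v := G q m x omin with hvdef
    by_cases hT : ∃ o1 o2, o1 < o2 ∧ o2 + m ≤ L ∧ o2 + m ≤ o1 + n ∧ G q m x o1 = G q m x o2
    · -- tie case: a window containing both positions is in SS via Tie
      classical
      obtain ⟨o1, o2, h12, h2L, hdist, heq⟩ := hT
      set j := if o1 + n ≤ L then o1 else L - n with hjdef
      have hjn : j + n ≤ L := by
        rw [hjdef]; split <;> omega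
      have hjo : j ≤ o1 := by
        rw [hjdef]; split <;> omega
      have ht2 : (o2 - j) + m ≤ n := by
        rw [hjdef]; split <;> omega
      refine ⟨(x.drop j).take n, ?_, window_infix q n x j⟩
      rw [SS, Finset.mem_filter]
      refine ⟨mem_WF.mpr (window_len q n x j hjn), Or.inr ?_⟩
      refine ⟨o1 - j, o2 - j, by omega, ?_, ?_⟩
      · rw [window_len q n x j hjn]; exact ht2
      · rw [G_window q n m x j (o1 - j) hjn (by omega), G_window q n m x j (o2 - j) hjn ht2]
        have e1 : j + (o1 - j) = o1 := by omega
        have e2 : j + (o2 - j) = o2 := by omega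
        rw [e1, e2]; exact heq
    · by_cases hA : ∃ o, r ≤ o ∧ o + n ≤ L + r ∧ G q m x o = v
      · -- middle-occurrence case: window with leftmost argmin exactly r
        classical
        obtain ⟨o, hro, hoL, hov⟩ := hA
        set j := o - r with hjdef
        have hjr : j + r = o := by omega
        have hjn : j + n ≤ L := by omega
        have hwlen : ((x.drop j).take n).length = n := window_len q n x j hjn
        refine ⟨(x.drop j).take n, ?_, window_infix q n x j⟩
        rw [SS, Finset.mem_filter]
        refine ⟨mem_WF.mpr hwlen, Or.inl ?_⟩
        rw [lam_eq_iff q m (by rw [hwlen]; omega)]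
        constructor
        · constructor
          · rw [hwlen]; exact hrm
          · intro t ht
            rw [hwlen] at ht
            rw [G_window q n m x j r hjn hrm, G_window q n m x j t hjn ht, hjr, hov]
            exact homin2 (j + t) (by omega)
        · intro k hk hIsMin
          obtain ⟨hk1, hk2⟩ := hIsMin
          rw [hwlen] at hk1 hk2
          have hkr := hk2 r (by omega)
          rw [G_window q n m x j k hjn hk1, G_window q n m x j r hjn hrm, hjr, hov] at hkr
          have hge : v ≤ G q m x (j + k) := homin2 (j + k) (by omega)
          have heqv : G q m x (j + k) = v := le_antisymm hkr hge
          exact hT ⟨j + k, o, by omega, by omega, by omega, by rw [heqv, hov]⟩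
      · -- recurse on the middle part, whose min value is strictly larger
        set T := L + m - (n + 1) with hTdef
        have hrT : r + T ≤ L := by omega
        set x' := (x.drop r).take T with hx'def
        have hx'len : x'.length = T := window_len q T x r hrT
        have hcompat : ∀ p, p + m ≤ T → G q m x' p = G q m x (r + p) := by
          intro p hp
          exact G_window q T m x r p hrT hp
        have hval' : ∀ p, p + m ≤ x'.length → q ^ m ≤ b + G q m x' p := by
          intro p hp
          rw [hx'len] at hp
          rw [hcompat p hp]
          have hge : v ≤ G q m x (r + p) := homin2 (r + p) (by omega)
          have hne : G q m x (r + p) ≠ v := by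
            intro hcon
            exact hA ⟨r + p, by omega, by omega, hcon⟩
          have hq2 := hval omin homin1
          omega
        have hlen' : 2 * n + (n + 1) * b ≤ x'.length := by
          rw [hx'len]
          have : (n+1) * (b+1) = (n+1)*b + (n+1) := by ring
          omega
        obtain ⟨s, hs, hinf⟩ := ih x' hval' hlen'
        exact ⟨s, hs, hinf.trans (window_infix q T x r)⟩


open Classical in
theorem exists_good_r (q n m : ℕ) (hq : 1 ≤ q) (hmn : m ≤ n) :
    ∃ r, r + m ≤ n ∧
      (n - m + 1) * ((WF q n).filter (fun w => lam q m w = r)).card ≤ q ^ n := by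
  classical
  have hmem : ∀ w ∈ WF q n, lam q m w ∈ Finset.range (n - m + 1) := by
    intro w hw
    have hl : w.length = n := mem_WF.mp hw
    have := (lam_spec q m (w := w) (by omega)).1
    rw [hl] at this
    exact Finset.mem_range.mpr (by omega)
  have hsum : (WF q n).card =
      ∑ r ∈ Finset.range (n - m + 1), ((WF q n).filter (fun w => lam q m w = r)).card :=
    Finset.card_eq_sum_card_fiberwise hmem
  have hsum2 : ∑ r ∈ Finset.range (n - m + 1),
      (n - m + 1) * ((WF q n).filter (fun w => lam q m w = r)).card
      ≤ ∑ _r ∈ Finset.range (n - m + 1), q ^ n := by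
    rw [← Finset.mul_sum, ← hsum, card_WF]
    simp [Finset.sum_const, Finset.card_range, mul_comm]
  obtain ⟨r, hr, hle⟩ := Finset.exists_le_of_sum_le ⟨0, Finset.mem_range.mpr (by omega)⟩ hsum2
  exact ⟨r, by have := Finset.mem_range.mp hr; omega, hle⟩

theorem pair_card (q n m p1 p2 : ℕ) (hq : 1 ≤ q) (h12 : p1 < p2) (h2 : p2 + m ≤ n) :
    ((WF q n).filter (fun w => G q m w p1 = G q m w p2)).card ≤ q ^ (n - m) := by
  classical
  have hmaps : ∀ w ∈ (WF q n).filter (fun w => G q m w p1 = G q m w p2),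
      w.take p2 ++ w.drop (p2 + m) ∈ WF q (n - m) := by
    intro w hw
    have hl : w.length = n := mem_WF.mp (Finset.mem_filter.mp hw).1
    rw [mem_WF, List.length_append, List.length_take, List.length_drop, hl]
    omega
  refine le_trans (Finset.card_le_card_of_injOn _ hmaps ?_) (le_of_eq (card_WF q (n - m)))
  intro w1 hw1 w2 hw2 heq
  simp only [Finset.coe_filter, Set.mem_setOf_eq] at hw1 hw2
  have hl1 : w1.length = n := mem_WF.mp hw1.1
  have hl2 : w2.length = n := mem_WF.mp hw2.1
  -- letter-level consequence of the equal factors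
  have hfac : ∀ (w : List (Fin q)), w.length = n → G q m w p1 = G q m w p2 →
      ∀ i, i < m → w[p1 + i]? = w[p2 + i]? := by
    intro w hl hG i hi
    have hfe : (w.drop p1).take m = (w.drop p2).take m :=
      val_inj q hq _ _ (by rw [G_len q m w p1 (by omega), G_len q m w p2 (by omega)]) hG
    have := congrArg (fun l => l[i]?) hfe
    simpa [List.getElem?_take, hi, List.getElem?_drop] using this
  have h1 := hfac w1 hl1 hw1.2
  have h2' := hfac w2 hl2 hw2.2
  -- split the appended equality
  have hsplit := List.append_inj heq
    (by rw [List.length_take, List.length_take, hl1, hl2])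
  have htake : w1.take p2 = w2.take p2 := hsplit.1
  have hdrop : w1.drop (p2 + m) = w2.drop (p2 + m) := hsplit.2
  -- pointwise equality by strong induction
  have key : ∀ k : ℕ, w1[k]? = w2[k]? := by
    intro k
    induction k using Nat.strong_induction_on with
    | _ k ih =>
      by_cases hk2 : k < p2
      · have := congrArg (fun l => l[k]?) htake
        simpa [List.getElem?_take, hk2] using this
      · by_cases hk3 : p2 + m ≤ k
        · have := congrArg (fun l => l[k - (p2 + m)]?) hdrop
          simp only [List.getElem?_drop] at this
          have e : p2 + m + (k - (p2 + m)) = k := by omega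
          rwa [e] at this
        · have hi : k - p2 < m := by omega
          have e : p2 + (k - p2) = k := by omega
          have e1 := h1 (k - p2) hi
          have e2 := h2' (k - p2) hi
          rw [e] at e1 e2
          rw [← e1, ← e2]
          exact ih (p1 + (k - p2)) (by omega)
  exact List.ext_getElem? key

open Classical in
theorem tie_card (q n m : ℕ) (hq : 1 ≤ q) (hm1 : 1 ≤ m) (hmn : m ≤ n) :
    ((WF q n).filter (fun w => Tie q m w)).card ≤ n * n * q ^ (n - m) := by
  classical
  set P := (Finset.range n ×ˢ Finset.range n).filter (fun pq => pq.1 < pq.2 ∧ pq.2 + m ≤ n)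
    with hP
  have hsub : (WF q n).filter (fun w => Tie q m w) ⊆
      P.biUnion (fun pq => (WF q n).filter (fun w => G q m w pq.1 = G q m w pq.2)) := by
    intro w hw
    obtain ⟨hwW, hTie⟩ := Finset.mem_filter.mp hw
    obtain ⟨t1, t2, h12, h2m, hGeq⟩ := hTie
    have hl : w.length = n := mem_WF.mp hwW
    rw [hl] at h2m
    refine Finset.mem_biUnion.mpr ⟨(t1, t2), ?_, Finset.mem_filter.mpr ⟨hwW, hGeq⟩⟩
    rw [hP, Finset.mem_filter, Finset.mem_product]
    exact ⟨⟨Finset.mem_range.mpr (by omega), Finset.mem_range.mpr (by omega)⟩, h12, h2m⟩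
  calc ((WF q n).filter (fun w => Tie q m w)).card
      ≤ (P.biUnion (fun pq => (WF q n).filter
          (fun w => G q m w pq.1 = G q m w pq.2))).card := Finset.card_le_card hsub
    _ ≤ ∑ pq ∈ P, ((WF q n).filter (fun w => G q m w pq.1 = G q m w pq.2)).card :=
        Finset.card_biUnion_le
    _ ≤ ∑ _pq ∈ P, q ^ (n - m) := by
        refine Finset.sum_le_sum ?_
        intro pq hpq
        rw [hP, Finset.mem_filter] at hpq
        exact pair_card q n m pq.1 pq.2 hq hpq.2.1 hpq.2.2
    _ = P.card * q ^ (n - m) := by simp [Finset.sum_const, mul_comm]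
    _ ≤ n * n * q ^ (n - m) := by
        have : P.card ≤ n * n := by
          refine le_trans (Finset.card_filter_le _ _) ?_
          rw [Finset.card_product, Finset.card_range]
        exact Nat.mul_le_mul_right _ this

open Classical in
theorem SS_card (q n m r : ℕ) (hq : 1 ≤ q) (hm1 : 1 ≤ m) (hmn : m ≤ n)
    (hr : (n - m + 1) * ((WF q n).filter (fun w => lam q m w = r)).card ≤ q ^ n) :
    (n - m + 1) * (SS q n m r).card ≤ q ^ n + (n - m + 1) * (n * n * q ^ (n - m)) := by
  classical
  have hsplit : (SS q n m r).card ≤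
      ((WF q n).filter (fun w => lam q m w = r)).card
      + ((WF q n).filter (fun w => Tie q m w)).card := by
    rw [SS]
    refine le_trans (Finset.card_le_card ?_) (Finset.card_union_le _ _)
    intro w hw
    rw [Finset.mem_filter] at hw
    rcases hw.2 with h | h
    · exact Finset.mem_union_left _ (Finset.mem_filter.mpr ⟨hw.1, h⟩)
    · exact Finset.mem_union_right _ (Finset.mem_filter.mpr ⟨hw.1, h⟩)
  have htie := tie_card q n m hq hm1 hmn
  calc (n - m + 1) * (SS q n m r).card
      ≤ (n - m + 1) * (((WF q n).filter (fun w => lam q m w = r)).card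
        + ((WF q n).filter (fun w => Tie q m w)).card) := Nat.mul_le_mul_left _ hsplit
    _ = (n - m + 1) * ((WF q n).filter (fun w => lam q m w = r)).card
        + (n - m + 1) * ((WF q n).filter (fun w => Tie q m w)).card := by ring
    _ ≤ q ^ n + (n - m + 1) * (n * n * q ^ (n - m)) := by
        have := Nat.mul_le_mul_left (n - m + 1) htie
        omega


def joinRep (q k : ℕ) (w : List (Fin q)) : List (Fin q) := (List.replicate k w).flatten

theorem len_joinRep (q k : ℕ) (w : List (Fin q)) : (joinRep q k w).length = k * w.length := by
  rw [joinRep, List.length_flatten, List.map_replicate, List.sum_replicate, smul_eq_mul]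

theorem joinRep_succ (q k : ℕ) (w : List (Fin q)) :
    joinRep q (k + 1) w = w ++ joinRep q k w := by
  rw [joinRep, List.replicate_succ, List.flatten_cons, joinRep]

theorem drop_joinRep (q : ℕ) (w : List (Fin q)) :
    ∀ a k, a ≤ k → (joinRep q k w).drop (a * w.length) = joinRep q (k - a) w := by
  intro a
  induction a with
  | zero => intro k _; simp
  | succ a ih =>
    intro k hk
    obtain ⟨k', rfl⟩ : ∃ k', k = k' + 1 := ⟨k - 1, by omega⟩
    rw [joinRep_succ]
    have e : (a + 1) * w.length = w.length + a * w.length := by ring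
    rw [e, ← List.drop_drop, List.drop_left, ih k' (by omega)]
    congr 1
    omega

theorem take_joinRep_w (q k : ℕ) (w : List (Fin q)) (hk : 1 ≤ k) :
    (joinRep q k w).take w.length = w := by
  obtain ⟨k', rfl⟩ : ∃ k', k = k' + 1 := ⟨k - 1, by omega⟩
  rw [joinRep_succ, List.take_left' rfl]

theorem take_joinRep_small (q k : ℕ) (w : List (Fin q)) (hk : 1 ≤ k) (i : ℕ)
    (hi : i ≤ w.length) : (joinRep q k w).take i = w.take i := by
  obtain ⟨k', rfl⟩ : ∃ k', k = k' + 1 := ⟨k - 1, by omega⟩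
  rw [joinRep_succ, List.take_append]
  have : i - w.length = 0 := by omega
  rw [this, List.take_zero, List.append_nil]

theorem rot_of_infix (q n k : ℕ) (w s : List (Fin q)) (hn : 1 ≤ n) (hw : w.length = n)
    (hs : s.length = n) (hinf : s <:+: joinRep q k w) : ∃ i, i < n ∧ s = w.rotate i := by
  obtain ⟨l, r, hlr⟩ := hinf
  have hlen : l.length + n + r.length = k * n := by
    have := congrArg List.length hlr
    rw [len_joinRep, hw] at this
    simp only [List.length_append, hs] at this
    omega
  set j := l.length with hj
  set a := j / n with ha
  set i := j % n with hi
  have hin : i < n := Nat.mod_lt _ (by omega)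
  have hdm : n * a + i = j := Nat.div_add_mod j n
  have hak : a + 1 ≤ k := by
    have h1 : j + n ≤ k * n := by omega
    have e1 : n * (a + 1) = n * a + n := by ring
    have e2 : n * k = k * n := by ring
    have h2 : n * (a + 1) ≤ n * k := by omega
    exact Nat.le_of_mul_le_mul_left h2 (by omega)
  have hseq : s = ((joinRep q k w).drop j).take n := by
    rw [← hlr, List.append_assoc, List.drop_left, List.take_left' hs]
  have hdrop1 : (joinRep q k w).drop (a * w.length) = joinRep q (k - a) w :=
    drop_joinRep q w a k (by omega)
  by_cases hi0 : i = 0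
  · refine ⟨0, by omega, ?_⟩
    rw [List.rotate_zero, hseq]
    have : j = a * w.length := by rw [hw]; have e : a * n = n * a := Nat.mul_comm _ _; omega
    rw [this, hdrop1, ← hw, take_joinRep_w q (k - a) w (by omega)]
  · have hak2 : a + 2 ≤ k := by
      have h1 : j + n ≤ k * n := by omega
      have e1 : n * (a + 2) = n * a + n + n := by ring
      have e2 : n * (k + 1) = k * n + n := by ring
      have h3 : n * (a + 2) < n * (k + 1) := by omega
      have := Nat.lt_of_mul_lt_mul_left h3
      omega
    refine ⟨i, hin, ?_⟩
    have hj2 : j = a * w.length + i := by rw [hw]; have e : a * n = n * a := Nat.mul_comm _ _; omega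
    rw [hseq, hj2, ← List.drop_drop, hdrop1]
    obtain ⟨c, hc⟩ : ∃ c, k - a = c + 1 := ⟨k - a - 1, by omega⟩
    rw [hc, joinRep_succ, List.drop_append]
    have h1 : i - w.length = 0 := by omega
    rw [h1, List.drop_zero, List.take_append]
    have h2 : (w.drop i).length = n - i := by rw [List.length_drop, hw]
    have h3 : (w.drop i).take n = w.drop i :=
      List.take_of_length_le (by rw [List.length_drop]; omega)
    rw [h3, h2]
    have h4 : n - (n - i) = i := by omega
    rw [h4, take_joinRep_small q c w (by omega) i (by omega),
      List.rotate_eq_drop_append_take (by omega)]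

theorem lower_bound (q n : ℕ) (hq : 1 ≤ q) (hn : 1 ≤ n) (S : Finset (List (Fin q)))
    (hlen : ∀ s ∈ S, s.length = n)
    (hunav : {w : List (Fin q) | ∀ s ∈ S, ¬ s <:+: w}.Finite) :
    q ^ n ≤ n * S.card := by
  classical
  have hx : ∀ w ∈ WF q n, ∃ p : List (Fin q) × ℕ,
      p ∈ S ×ˢ Finset.range n ∧ p.1 = w.rotate p.2 := by
    intro w hw
    have hwl : w.length = n := mem_WF.mp hw
    have hexk : ∃ k, ∃ s ∈ S, s <:+: joinRep q k w := by
      by_contra hno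
      push_neg at hno
      refine hunav.not_infinite (Set.infinite_of_injective_forall_mem
        (f := fun k => joinRep q k w) ?_ ?_)
      · intro k1 k2 h
        have := congrArg List.length h
        rw [len_joinRep, len_joinRep, hwl] at this
        exact Nat.eq_of_mul_eq_mul_right (by omega) this
      · intro k
        exact fun s hs => hno k s hs
    obtain ⟨k, s, hsS, hinf⟩ := hexk
    obtain ⟨i, hi, hrot⟩ := rot_of_infix q n k w s hn hwl (hlen s hsS) hinf
    exact ⟨(s, i), Finset.mem_product.mpr ⟨hsS, Finset.mem_range.mpr hi⟩, hrot⟩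
  set F : List (Fin q) → List (Fin q) × ℕ := fun w =>
    if h : ∃ p : List (Fin q) × ℕ, p ∈ S ×ˢ Finset.range n ∧ p.1 = w.rotate p.2
    then h.choose else ([], 0) with hF
  have hcard : (WF q n).card ≤ (S ×ˢ Finset.range n).card := by
    refine Finset.card_le_card_of_injOn F ?_ ?_
    · intro w hw
      have h := hx w hw
      rw [hF]
      simp only [dif_pos h]
      exact h.choose_spec.1
    · intro w1 hw1 w2 hw2 heq
      simp only [Finset.mem_coe] at hw1 hw2
      have h1 := hx w1 hw1
      have h2 := hx w2 hw2
      rw [hF] at heq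
      simp only [dif_pos h1, dif_pos h2] at heq
      obtain ⟨hp1, hr1⟩ := h1.choose_spec
      obtain ⟨hp2, hr2⟩ := h2.choose_spec
      rw [heq] at hr1
      have hieq : h2.choose.2 < n := Finset.mem_range.mp (Finset.mem_product.mp hp2).2
      set i := h2.choose.2
      have hl1 : w1.length = n := mem_WF.mp hw1
      have hl2 : w2.length = n := mem_WF.mp hw2
      have : w1.rotate i = w2.rotate i := by rw [← hr1, ← hr2]
      have hrr := congrArg (fun l => l.rotate (n - i)) this
      simp only [List.rotate_rotate] at hrr
      have hni : i + (n - i) = n := by omega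
      rw [hni] at hrr
      have hx1 : w1.rotate n = w1 := by rw [← hl1]; exact List.rotate_length w1
      have hx2 : w2.rotate n = w2 := by rw [← hl2]; exact List.rotate_length w2
      rwa [hx1, hx2] at hrr
  rw [card_WF, Finset.card_product, Finset.card_range] at hcard
  calc q ^ n ≤ S.card * n := hcard
  _ = n * S.card := Nat.mul_comm _ _


theorem lin_le_pow : ∀ t, 9 ≤ t → 20 * (t + 1) ≤ 2 ^ t := by
  intro t ht
  induction t, ht using Nat.le_induction with
  | base => norm_num
  | succ t ht ih =>
    have h20 : 20 ≤ 2 ^ t := by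
      calc 20 ≤ 20 * (t + 1) := by omega
      _ ≤ 2 ^ t := ih
    calc 20 * (t + 1 + 1) = 20 * (t + 1) + 20 := by ring
    _ ≤ 2 ^ t + 2 ^ t := by omega
    _ = 2 ^ (t + 1) := by ring

theorem pow20_le_pow (k : ℕ) (hk : 1025 ≤ k) : k ^ 20 ≤ 2 ^ k := by
  set t := Nat.clog 2 k with htdef
  have ht1 : k ≤ 2 ^ t := Nat.le_pow_clog one_lt_two k
  have ht2 : 11 ≤ t := by
    have : 2 ^ 10 < k := by norm_num; omega
    have := (Nat.lt_clog_iff_pow_lt one_lt_two).mpr this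
    omega
  have hpred : 2 ^ (t - 1) < k := Nat.pow_pred_clog_lt_self one_lt_two (by omega)
  have h3 : 20 * t ≤ k := by
    have h4 := lin_le_pow (t - 1) (by omega)
    have e : t - 1 + 1 = t := by omega
    rw [e] at h4
    omega
  calc k ^ 20 ≤ (2 ^ t) ^ 20 := Nat.pow_le_pow_left ht1 20
  _ = 2 ^ (20 * t) := by rw [← pow_mul, Nat.mul_comm]
  _ ≤ 2 ^ k := Nat.pow_le_pow_right (by omega) h3

theorem pow5_le_q_sqrt (q n : ℕ) (hq : 2 ≤ q) (hn : 1050625 ≤ n) :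
    n ^ 5 ≤ q ^ Nat.sqrt n := by
  set k := Nat.sqrt n with hkdef
  have hk : 1025 ≤ k := Nat.le_sqrt.mpr (by omega)
  have hn2 : n < (k + 1) * (k + 1) := Nat.lt_succ_sqrt n
  calc n ^ 5 ≤ ((k + 1) * (k + 1)) ^ 5 := Nat.pow_le_pow_left (by omega) 5
  _ = (k + 1) ^ 10 := by ring
  _ ≤ (k * k) ^ 10 := Nat.pow_le_pow_left (by nlinarith) 10
  _ = k ^ 20 := by ring
  _ ≤ 2 ^ k := pow20_le_pow k hk
  _ ≤ q ^ k := Nat.pow_le_pow_left hq k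


theorem tendsto_sqrt_div : Tendsto (fun n : ℕ => (Nat.sqrt n : ℝ) / n) atTop (nhds 0) := by
  have h1 : Tendsto (fun n : ℕ => (Nat.sqrt n : ℝ)) atTop atTop :=
    tendsto_natCast_atTop_atTop.comp
      (tendsto_atTop_atTop.mpr (fun b => ⟨b * b, fun n hn => Nat.le_sqrt.mpr hn⟩))
  have h2 : Tendsto (fun n : ℕ => ((Nat.sqrt n : ℝ))⁻¹) atTop (nhds 0) :=
    h1.inv_tendsto_atTop
  refine tendsto_of_tendsto_of_tendsto_of_le_of_le' tendsto_const_nhds h2 ?_ ?_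
  · filter_upwards with n
    positivity
  · filter_upwards [eventually_ge_atTop 1] with n hn
    have hs1 : 1 ≤ Nat.sqrt n := Nat.le_sqrt.mpr (by omega)
    have hsq : (Nat.sqrt n : ℝ) * (Nat.sqrt n : ℝ) ≤ n := by
      have h := Nat.sqrt_le' n
      have : ((Nat.sqrt n * Nat.sqrt n : ℕ) : ℝ) ≤ (n : ℝ) := by
        exact_mod_cast Nat.le_of_eq (by ring) |>.trans h
      push_cast at this
      linarith
    have hspos : (0:ℝ) < (Nat.sqrt n : ℝ) := by exact_mod_cast hs1
    have hnpos : (0:ℝ) < (n : ℝ) := by exact_mod_cast hn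
    rw [div_le_iff₀ hnpos, inv_mul_eq_div, le_div_iff₀ hspos]
    nlinarith

theorem tendsto_upper :
    Tendsto (fun n : ℕ => (n:ℝ) / ((n:ℝ) - Nat.sqrt n + 1) + 1 / n) atTop (nhds 1) := by
  have hinv : Tendsto (fun n : ℕ => (n:ℝ)⁻¹) atTop (nhds 0) :=
    tendsto_inv_atTop_zero.comp tendsto_natCast_atTop_atTop
  have hd : Tendsto (fun n : ℕ => 1 - (Nat.sqrt n : ℝ) / n + (n:ℝ)⁻¹) atTop (nhds 1) := by
    have h1 : Tendsto (fun _ : ℕ => (1:ℝ)) atTop (nhds 1) := tendsto_const_nhds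
    have h2 := (h1.sub tendsto_sqrt_div).add hinv
    simpa using h2
  have hfrac : Tendsto (fun n : ℕ => (1 - (Nat.sqrt n : ℝ) / n + (n:ℝ)⁻¹)⁻¹) atTop (nhds 1) := by
    have h3 := hd.inv₀ (one_ne_zero)
    simpa using h3
  have heq : ∀ᶠ n : ℕ in atTop, (1 - (Nat.sqrt n : ℝ) / n + (n:ℝ)⁻¹)⁻¹
      = (n:ℝ) / ((n:ℝ) - Nat.sqrt n + 1) := by
    filter_upwards [eventually_ge_atTop 1] with n hn
    have hnpos : (0:ℝ) < (n : ℝ) := by exact_mod_cast hn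
    have hsle : (Nat.sqrt n : ℝ) ≤ n := by exact_mod_cast Nat.sqrt_le_self n
    have hden2 : (0:ℝ) < (n:ℝ) - Nat.sqrt n + 1 := by linarith
    have hden1 : (0:ℝ) < 1 - (Nat.sqrt n : ℝ) / n + (n:ℝ)⁻¹ := by
      have : 1 - (Nat.sqrt n : ℝ) / n + (n:ℝ)⁻¹ = ((n:ℝ) - Nat.sqrt n + 1) / n := by
        field_simp
      rw [this]
      positivity
    rw [inv_eq_one_div, div_eq_div_iff (ne_of_gt hden1) (ne_of_gt hden2)]
    field_simp
  have := hfrac.congr' heq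
  have h2 := this.add (tendsto_const_div_atTop_nhds_zero_nat 1)
  simpa using h2



open Classical in
theorem main_S_gen (q n m : ℕ) (hq : 1 ≤ q) (hm1 : 1 ≤ m) (hmn : m + 1 ≤ n) :
    ∃ (S : Finset (List (Fin q))) (A : ℕ), (∀ s ∈ S, s.length = n) ∧
      {w : List (Fin q) | ∀ s ∈ S, ¬ s <:+: w}.Finite ∧
      (n - m + 1) * A ≤ q ^ n ∧ S.card ≤ A + n * n * q ^ (n - m) := by
  obtain ⟨r, hrm, hA⟩ := exists_good_r q n m hq (by omega)
  refine ⟨SS q n m r, ((WF q n).filter (fun w => lam q m w = r)).card, ?_, ?_, hA, ?_⟩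
  · intro s hs
    rw [SS, Finset.mem_filter] at hs
    exact mem_WF.mp hs.1
  · refine Set.Finite.subset (List.finite_length_lt (Fin q) (2 * n + (n + 1) * q ^ m)) ?_
    intro x hx
    simp only [Set.mem_setOf_eq]
    by_contra hlong
    push_neg at hlong
    obtain ⟨s, hsS, hinf⟩ := find_in_SS q n m r hq (by omega) hrm (q ^ m) x
      (fun p _ => Nat.le_add_right _ _) (by omega)
    exact hx s hsS hinf
  · have hsplit : (SS q n m r).card ≤
        ((WF q n).filter (fun w => lam q m w = r)).card
        + ((WF q n).filter (fun w => Tie q m w)).card := by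
      rw [SS]
      refine le_trans (Finset.card_le_card ?_) (Finset.card_union_le _ _)
      intro w hw
      rw [Finset.mem_filter] at hw
      rcases hw.2 with h | h
      · exact Finset.mem_union_left _ (Finset.mem_filter.mpr ⟨hw.1, h⟩)
      · exact Finset.mem_union_right _ (Finset.mem_filter.mpr ⟨hw.1, h⟩)
    have htie := tie_card q n m hq hm1 (by omega)
    omega

theorem main_S (q n : ℕ) (hq : 1 ≤ q) (hm1 : 1 ≤ Nat.sqrt n) (hmn : Nat.sqrt n + 1 ≤ n) :
    ∃ (S : Finset (List (Fin q))) (A : ℕ), (∀ s ∈ S, s.length = n) ∧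
      {w : List (Fin q) | ∀ s ∈ S, ¬ s <:+: w}.Finite ∧
      (n - Nat.sqrt n + 1) * A ≤ q ^ n ∧ S.card ≤ A + n * n * q ^ (n - Nat.sqrt n) :=
  main_S_gen q n (Nat.sqrt n) hq hm1 hmn

end UnavoidHelp

open UnavoidHelp in
theorem stmt_3 (q : ℕ) (hq : 2 ≤ q) (M : ℕ → ℕ)
    -- M n = M_w(n): the minimum cardinality of an unavoidable set S ⊆ A^n
    (hM : ∀ n, 1 ≤ n →
      IsLeast {k : ℕ | ∃ S : Finset (List (Fin q)), (∀ s ∈ S, s.length = n) ∧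
        UnavoidableW (↑S : Set (List (Fin q))) ∧ S.card = k} (M n)) :
    -- n · M_w(n) / q^n → 1 as n → ∞
    Filter.Tendsto (fun n : ℕ => (n : ℝ) * (M n : ℝ) / (q : ℝ) ^ n)
      Filter.atTop (nhds 1) := by
  have hq1 : 1 ≤ q := by omega
  have hqR : (0:ℝ) < (q:ℝ) := by exact_mod_cast (by omega : 0 < q)
  have hlow : ∀ᶠ n : ℕ in atTop, (1:ℝ) ≤ (n : ℝ) * (M n : ℝ) / (q : ℝ) ^ n := by
    filter_upwards [eventually_ge_atTop 1] with n hn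
    obtain ⟨S₀, hlen, hunav, hcard⟩ := (hM n hn).1
    have hunav' : {w : List (Fin q) | ∀ s ∈ S₀, ¬ s <:+: w}.Finite := hunav
    have hnat : q ^ n ≤ n * M n := by
      rw [← hcard]; exact lower_bound q n hq1 hn S₀ hlen hunav'
    have hpow : (0:ℝ) < (q:ℝ) ^ n := by positivity
    rw [le_div_iff₀ hpow, one_mul]
    exact_mod_cast hnat
  have hup : ∀ᶠ n : ℕ in atTop, (n : ℝ) * (M n : ℝ) / (q : ℝ) ^ n
      ≤ (n:ℝ) / ((n:ℝ) - Nat.sqrt n + 1) + 1 / n := by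
    filter_upwards [eventually_ge_atTop 1050625] with n hn
    have hn1 : 1 ≤ n := by omega
    have hm1 : 1 ≤ Nat.sqrt n := Nat.le_sqrt.mpr (by omega)
    have hmn : Nat.sqrt n + 1 ≤ n := by
      have := Nat.sqrt_lt_self (show 1 < n by omega); omega
    set m := Nat.sqrt n with hmdef
    obtain ⟨S, A, hSlen, hSfin, hA, hScard⟩ := main_S q n hq1 hm1 hmn
    have hMle : M n ≤ S.card := (hM n hn1).2 ⟨S, hSlen, hSfin, rfl⟩
    have hMle2 : M n ≤ A + n * n * q ^ (n - m) := hMle.trans hScard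
    have hnpos : (0:ℝ) < (n:ℝ) := by exact_mod_cast hn1
    have hpow : (0:ℝ) < (q:ℝ) ^ n := by positivity
    have hmler : (m:ℝ) ≤ (n:ℝ) := by exact_mod_cast (by omega : m ≤ n)
    have hden : (0:ℝ) < (n:ℝ) - m + 1 := by linarith
    have hcast : ((n - m + 1 : ℕ) : ℝ) = (n:ℝ) - m + 1 := by
      push_cast [Nat.cast_sub (by omega : m ≤ n)]
      ring
    have hq5 : ((n:ℝ))^5 ≤ (q:ℝ)^m := by exact_mod_cast pow5_le_q_sqrt q n hq hn
    have hsplitpow : (q:ℝ)^n = (q:ℝ)^m * (q:ℝ)^(n - m) := by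
      rw [← pow_add]
      congr 1
      omega
    have hnum : (n:ℝ) * (M n : ℝ) ≤ (n:ℝ) * ((A:ℝ) + (n:ℝ) * (n:ℝ) * (q:ℝ)^(n-m)) := by
      have hc : ((M n : ℕ):ℝ) ≤ ((A + n*n*q^(n-m) : ℕ):ℝ) := by exact_mod_cast hMle2
      push_cast at hc
      have := mul_le_mul_of_nonneg_left hc hnpos.le
      linarith [this]
    have step1 : (n : ℝ) * (M n : ℝ) / (q : ℝ) ^ n
        ≤ ((n:ℝ) * ((A:ℝ) + (n:ℝ) * (n:ℝ) * (q:ℝ)^(n-m))) / (q:ℝ)^n :=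
      (div_le_div_iff_of_pos_right hpow).mpr hnum
    have split2 : ((n:ℝ) * ((A:ℝ) + (n:ℝ)*(n:ℝ)*(q:ℝ)^(n-m)))/(q:ℝ)^n
        = (n:ℝ)*(A:ℝ)/(q:ℝ)^n + (n:ℝ)*((n:ℝ)*(n:ℝ)*(q:ℝ)^(n-m))/(q:ℝ)^n := by ring
    have bound1 : (n:ℝ)*(A:ℝ)/(q:ℝ)^n ≤ (n:ℝ)/((n:ℝ) - m + 1) := by
      rw [div_le_div_iff₀ hpow hden]
      have hAc : ((n:ℝ) - (m:ℝ) + 1) * (A:ℝ) ≤ (q:ℝ)^n := by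
        rw [← hcast]
        exact_mod_cast hA
      calc (n:ℝ)*(A:ℝ)*((n:ℝ) - (m:ℝ) + 1) = (n:ℝ) * (((n:ℝ) - (m:ℝ) + 1) * (A:ℝ)) := by ring
      _ ≤ (n:ℝ) * (q:ℝ)^n := mul_le_mul_of_nonneg_left hAc hnpos.le
    have bound2 : (n:ℝ)*((n:ℝ)*(n:ℝ)*(q:ℝ)^(n-m))/(q:ℝ)^n ≤ 1/(n:ℝ) := by
      rw [div_le_div_iff₀ hpow hnpos, hsplitpow]
      have h45 : (n:ℝ)^4 ≤ (q:ℝ)^m := by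
        calc (n:ℝ)^4 ≤ (n:ℝ)^5 := by
              apply pow_le_pow_right₀ ?_ (by norm_num)
              exact_mod_cast hn1
        _ ≤ _ := hq5
      have hqnm : (0:ℝ) ≤ (q:ℝ)^(n-m) := by positivity
      calc (n:ℝ)*((n:ℝ)*(n:ℝ)*(q:ℝ)^(n-m))*(n:ℝ) = (n:ℝ)^4 * (q:ℝ)^(n-m) := by ring
      _ ≤ (q:ℝ)^m * (q:ℝ)^(n-m) := mul_le_mul_of_nonneg_right h45 hqnm
      _ = 1 * ((q:ℝ)^m * (q:ℝ)^(n-m)) := by ring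
    calc (n : ℝ) * (M n : ℝ) / (q : ℝ) ^ n
        ≤ ((n:ℝ) * ((A:ℝ) + (n:ℝ)*(n:ℝ)*(q:ℝ)^(n-m)))/(q:ℝ)^n := step1
      _ = (n:ℝ)*(A:ℝ)/(q:ℝ)^n + (n:ℝ)*((n:ℝ)*(n:ℝ)*(q:ℝ)^(n-m))/(q:ℝ)^n := split2
      _ ≤ (n:ℝ)/((n:ℝ) - (m:ℝ) + 1) + 1/(n:ℝ) := add_le_add bound1 bound2
  exact tendsto_of_tendsto_of_tendsto_of_le_of_le' tendsto_const_nhds tendsto_upper hlow hup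
end

section
/- Let U(n) denote the number of unavoidable subsets of A^n. Then log₂ U(n) / q^n → 1 as n → ∞; equivalently, there exist ε_n → 0 such that there are at least 2^{q^n (1 − ε_n)} unavoidable subsets S ⊆ A^n. -/
open Finset List

namespace Stmt4Aux

variable (q : ℕ)

abbrev A := Fin (q + 2)

def Z (m : ℕ) : List (A q) := List.replicate m 0

lemma length_Z (m : ℕ) : (Z q m).length = m := List.length_replicate

def W (n : ℕ) : Finset (List (A q)) :=
  Finset.univ.image (fun v : List.Vector (A q) n => v.toList)

lemma mem_W {n : ℕ} {w : List (A q)} : w ∈ W q n ↔ w.length = n := by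
  constructor
  · intro h
    rw [W, Finset.mem_image] at h
    obtain ⟨v, -, rfl⟩ := h
    exact v.toList_length
  · intro h
    exact Finset.mem_image.2 ⟨⟨w, h⟩, Finset.mem_univ _, rfl⟩

lemma card_W (n : ℕ) : (W q n).card = (q + 2) ^ n := by
  rw [W, Finset.card_image_of_injective _ List.Vector.toList_injective,
    Finset.card_univ, card_vector, Fintype.card_fin]

def Free (n m : ℕ) : Finset (List (A q)) := (W q n).filter (fun w => ¬ Z q m <:+: w)

lemma free_card_rec (m n : ℕ) :
    (Free q (m + n) m).card ≤ ((q + 2) ^ m - 1) * (Free q n m).card := by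
  have hZW : Z q m ∈ W q m := mem_W q |>.2 (length_Z q m)
  have h1 : ((W q m).filter (fun w => w ≠ Z q m)).card = (q + 2) ^ m - 1 := by
    rw [Finset.filter_ne', Finset.card_erase_of_mem hZW, card_W]
  calc (Free q (m + n) m).card
      ≤ (((W q m).filter (fun w => w ≠ Z q m)) ×ˢ Free q n m).card := by
        apply Finset.card_le_card_of_injOn (fun w => (w.take m, w.drop m))
        · intro w hw
          simp only [Finset.mem_coe, Free, Finset.mem_filter, mem_W] at hw
          obtain ⟨hlen, hfree⟩ := hw
          rw [Finset.mem_coe, Finset.mem_product, Finset.mem_filter, mem_W]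
          refine ⟨⟨by rw [length_take, hlen]; omega, ?_⟩, ?_⟩
          · intro he
            exact hfree (he ▸ (w.take_prefix m).isInfix)
          · rw [Free, Finset.mem_filter, mem_W]
            refine ⟨by rw [length_drop, hlen]; omega, ?_⟩
            intro hi
            exact hfree (hi.trans (w.drop_suffix m).isInfix)
        · intro w1 h1 w2 h2 he
          simp only [Prod.mk.injEq] at he
          rw [← List.take_append_drop m w1, ← List.take_append_drop m w2, he.1, he.2]
      _ = ((q + 2) ^ m - 1) * (Free q n m).card := by
        rw [Finset.card_product, h1]

lemma free_card (m : ℕ) (hm : 1 ≤ m) :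
    ∀ n, (Free q n m).card ≤ ((q + 2) ^ m - 1) ^ (n / m) * (q + 2) ^ (n % m) := by
  intro n
  induction n using Nat.strong_induction_on with
  | _ n ih =>
    rcases lt_or_ge n m with h | h
    · rw [Nat.div_eq_of_lt h, Nat.mod_eq_of_lt h, pow_zero, one_mul]
      calc (Free q n m).card ≤ (W q n).card := Finset.card_le_card (Finset.filter_subset _ _)
        _ = (q + 2) ^ n := card_W q n
    · have hn : n = m + (n - m) := by omega
      have hrec := free_card_rec q m (n - m)
      rw [← hn] at hrec
      have hih := ih (n - m) (by omega)
      calc (Free q n m).card ≤ ((q + 2) ^ m - 1) * (Free q (n - m) m).card := hrec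
        _ ≤ ((q + 2) ^ m - 1) * (((q + 2) ^ m - 1) ^ ((n - m) / m) * (q + 2) ^ ((n - m) % m)) :=
            Nat.mul_le_mul_left _ hih
        _ = ((q + 2) ^ m - 1) ^ (n / m) * (q + 2) ^ (n % m) := by
            rw [Nat.div_eq_sub_div (by omega) h, Nat.mod_eq_sub_mod h]
            ring

def B (n m : ℕ) : Finset (List (A q)) :=
  (W q n).filter (fun w => Z q m <+: w ∨ ¬ Z q m <:+: w)

lemma card_B (n m : ℕ) (hmn : m ≤ n) :
    (B q n m).card ≤ (q + 2) ^ (n - m) + (Free q n m).card := by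
  rw [B, Finset.filter_or]
  refine (Finset.card_union_le _ _).trans (Nat.add_le_add ?_ le_rfl)
  rw [← card_W q (n - m)]
  apply Finset.card_le_card_of_injOn (fun w => w.drop m)
  · intro w hw
    rw [Finset.mem_coe, Finset.mem_filter, mem_W] at hw
    rw [Finset.mem_coe, mem_W, length_drop, hw.1]
  · intro w1 hw1 w2 hw2 he
    simp only [Finset.coe_filter, Set.mem_setOf_eq] at hw1 hw2
    obtain ⟨t1, rfl⟩ := hw1.2
    obtain ⟨t2, rfl⟩ := hw2.2
    simp only at he
    rw [List.drop_left' (length_Z q m), List.drop_left' (length_Z q m)] at he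
    rw [he]


lemma exists_mem_B_infix (n m : ℕ) (hm : 1 ≤ m) (hmn : m ≤ n) (w : List (A q))
    (hw : 2 * n ≤ w.length) : ∃ s ∈ B q n m, s <:+: w := by
  have hn1 : n ≤ w.length := by omega
  have hlt : (w.take n).length = n := by rw [length_take]; omega
  by_cases hz : Z q m <:+: w.take n
  · obtain ⟨s₁, t₁, h⟩ := hz
    set i := s₁.length with hi
    have hlen : i + m + t₁.length = n := by
      have := congrArg List.length h
      simp only [length_append, length_Z, hlt] at this
      omega
    have him : i + m ≤ n := by omega
    refine ⟨(w.drop i).take n, ?_, ?_⟩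
    · have hld : ((w.drop i).take n).length = n := by
        rw [length_take, length_drop]; omega
      have hdt : (w.take n).drop i = Z q m ++ t₁ := by
        rw [← h, append_assoc, List.drop_left' hi.symm]
      have hkey : (w.drop i).take m = Z q m := by
        have h2 : (w.drop i).take (n - i) = Z q m ++ t₁ := by
          rw [← List.drop_take, hdt]
        have h3 : ((w.drop i).take (n - i)).take m = Z q m := by
          rw [h2, List.take_left' (length_Z q m)]
        rwa [List.take_take, min_eq_left (by omega)] at h3
      rw [B, Finset.mem_filter, mem_W]
      refine ⟨hld, Or.inl ?_⟩
      have : ((w.drop i).take n).take m = Z q m := by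
        rw [List.take_take, min_eq_left (by omega), hkey]
      rw [← this]
      exact List.take_prefix _ _
    · exact ((w.drop i).take_prefix n).isInfix.trans (w.drop_suffix i).isInfix
  · refine ⟨w.take n, ?_, (w.take_prefix n).isInfix⟩
    rw [B, Finset.mem_filter, mem_W]
    exact ⟨hlt, Or.inr hz⟩

lemma unavoidable_of_B_subset (n m : ℕ) (hm : 1 ≤ m) (hmn : m ≤ n)
    (S : Finset (List (A q))) (hS : B q n m ⊆ S) :
    UnavoidableW (↑S : Set (List (A q))) := by
  apply Set.Finite.subset (List.finite_length_le (A q) (2 * n))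
  intro w hw
  simp only [Set.mem_setOf_eq] at hw ⊢
  by_contra hlen
  push_neg at hlen
  obtain ⟨s, hsB, hsw⟩ := exists_mem_B_infix q n m hm hmn w (by omega)
  exact hw s (hS hsB) hsw

lemma finite_sub (n : ℕ) : Finite {S : Finset (List (A q)) //
    (∀ s ∈ S, s.length = n) ∧ UnavoidableW (↑S : Set (List (A q)))} := by
  apply Finite.of_injective
    (fun S : {S : Finset (List (A q)) //
        (∀ s ∈ S, s.length = n) ∧ UnavoidableW (↑S : Set (List (A q)))} =>
      (⟨S.1, Finset.mem_powerset.2 fun x hx => (mem_W q).2 (S.2.1 x hx)⟩ :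
        {T // T ∈ (W q n).powerset}))
  intro S T h
  exact Subtype.ext (Subtype.mk_eq_mk.1 h)

lemma U_le (n : ℕ) :
    Nat.card {S : Finset (List (A q)) //
      (∀ s ∈ S, s.length = n) ∧ UnavoidableW (↑S : Set (List (A q)))} ≤ 2 ^ ((q + 2) ^ n) := by
  have hinj : Function.Injective
      (fun S : {S : Finset (List (A q)) //
          (∀ s ∈ S, s.length = n) ∧ UnavoidableW (↑S : Set (List (A q)))} =>
        (⟨S.1, Finset.mem_powerset.2 fun x hx => (mem_W q).2 (S.2.1 x hx)⟩ :
          {T // T ∈ (W q n).powerset})) := by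
    intro S T h
    exact Subtype.ext (Subtype.mk_eq_mk.1 h)
  calc Nat.card _ ≤ Nat.card {T // T ∈ (W q n).powerset} :=
        Nat.card_le_card_of_injective _ hinj
    _ = 2 ^ ((q + 2) ^ n) := by
        rw [Nat.card_eq_finsetCard, Finset.card_powerset, card_W]

lemma U_ge (n m : ℕ) (hm : 1 ≤ m) (hmn : m ≤ n) :
    2 ^ ((q + 2) ^ n - (B q n m).card) ≤ Nat.card {S : Finset (List (A q)) //
      (∀ s ∈ S, s.length = n) ∧ UnavoidableW (↑S : Set (List (A q)))} := by
  have hBW : B q n m ⊆ W q n := Finset.filter_subset _ _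
  have := finite_sub q n
  have hinj : Function.Injective
      (fun T : {T // T ∈ (W q n \ B q n m).powerset} =>
        (⟨B q n m ∪ T.1, ?_, ?_⟩ : {S : Finset (List (A q)) //
          (∀ s ∈ S, s.length = n) ∧ UnavoidableW (↑S : Set (List (A q)))})) := ?_
  · calc 2 ^ ((q + 2) ^ n - (B q n m).card)
        = Nat.card {T // T ∈ (W q n \ B q n m).powerset} := by
          rw [Nat.card_eq_finsetCard, Finset.card_powerset, Finset.card_sdiff_of_subset hBW, card_W]
      _ ≤ _ := Nat.card_le_card_of_injective _ hinj
  · intro s hs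
    rcases Finset.mem_union.1 hs with h | h
    · exact (mem_W q).1 (hBW h)
    · exact (mem_W q).1 (Finset.mem_sdiff.1 (Finset.mem_powerset.1 T.2 h)).1
  · exact unavoidable_of_B_subset q n m hm hmn _ Finset.subset_union_left
  · intro T₁ T₂ h
    have h' : B q n m ∪ T₁.1 = B q n m ∪ T₂.1 := congrArg Subtype.val h
    have hd : ∀ T : {T // T ∈ (W q n \ B q n m).powerset}, Disjoint (B q n m) T.1 := by
      intro T
      exact (Finset.disjoint_of_subset_right (Finset.mem_powerset.1 T.2)
        Finset.disjoint_sdiff).symm.symm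
    have := congrArg (fun s => s \ B q n m) h'
    simp only [Finset.union_sdiff_cancel_left (hd T₁), Finset.union_sdiff_cancel_left (hd T₂)]
      at this
    exact Subtype.ext this

end Stmt4Aux

theorem stmt_4 (q : ℕ) (hq : 2 ≤ q) (U : ℕ → ℕ)
    -- U n = the number of unavoidable subsets S ⊆ A^n
    (hU : ∀ n, U n = Nat.card {S : Finset (List (Fin q)) //
      (∀ s ∈ S, s.length = n) ∧ UnavoidableW (↑S : Set (List (Fin q)))}) :
    -- log₂ U(n) / q^n → 1 as n → ∞
    Filter.Tendsto (fun n : ℕ => Real.logb 2 (U n) / (q : ℝ) ^ n)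
      Filter.atTop (nhds 1) := by
  obtain ⟨p, rfl⟩ : ∃ p, q = p + 2 := ⟨q - 2, by omega⟩
  set Q : ℝ := ((p + 2 : ℕ) : ℝ) with hQdef
  have hQ2 : (2 : ℝ) ≤ Q := by rw [hQdef]; exact_mod_cast Nat.le_add_left 2 p
  have hQ0 : (0 : ℝ) < Q := by linarith
  have hlogpow : ∀ k : ℕ, Real.logb 2 ((2 : ℝ) ^ k) = k := by
    intro k
    rw [Real.logb_pow, Real.logb_self_eq_one (by norm_num : (1:ℝ) < 2), mul_one]
  have hUle : ∀ n, U n ≤ 2 ^ ((p + 2) ^ n) := by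
    intro n; rw [hU n]; exact Stmt4Aux.U_le p n
  have hUge : ∀ m n, 1 ≤ m → m ≤ n →
      2 ^ ((p + 2) ^ n - (Stmt4Aux.B p n m).card) ≤ U n := by
    intro m n hm hmn; rw [hU n]; exact Stmt4Aux.U_ge p n m hm hmn
  have hlog_up : ∀ n, Real.logb 2 (U n) ≤ Q ^ n := by
    intro n
    have hcast : ((2 ^ ((p + 2) ^ n) : ℕ) : ℝ) = (2 : ℝ) ^ ((p + 2) ^ n) := by push_cast; ring
    rcases Nat.eq_zero_or_pos (U n) with h | h
    · rw [h]
      simp only [Nat.cast_zero, Real.logb_zero]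
      positivity
    · calc Real.logb 2 (U n) ≤ Real.logb 2 ((2 : ℝ) ^ ((p + 2) ^ n)) := by
            apply Real.logb_le_logb_of_le one_lt_two (by exact_mod_cast h)
            rw [← hcast]
            exact_mod_cast hUle n
        _ = (((p + 2) ^ n : ℕ) : ℝ) := hlogpow _
        _ = Q ^ n := by rw [hQdef]; push_cast; ring
  rw [Metric.tendsto_atTop]
  intro ε hε
  -- choose m
  obtain ⟨m₀, hm₀⟩ := exists_pow_lt_of_lt_one (half_pos hε)
    (show (1 / Q) < 1 by rw [div_lt_one hQ0]; linarith)
  have h1Q0 : (0 : ℝ) ≤ 1 / Q := by positivity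
  have h1Q1 : 1 / Q ≤ 1 := by rw [div_le_one hQ0]; linarith
  set m := m₀ + 1 with hmdef
  have hm1 : 1 ≤ m := Nat.le_add_left 1 m₀
  have hmε : (1 / Q) ^ m < ε / 2 :=
    lt_of_le_of_lt (pow_le_pow_of_le_one h1Q0 h1Q1 (Nat.le_succ m₀)) hm₀
  have hQm1 : (1 : ℝ) ≤ Q ^ m := one_le_pow₀ (by linarith)
  have hQmpos : (0 : ℝ) < Q ^ m := by positivity
  set c : ℝ := (Q ^ m - 1) / Q ^ m with hcdef
  have hc0 : 0 ≤ c := by apply div_nonneg (by linarith) (le_of_lt hQmpos)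
  have hc1 : c < 1 := by rw [hcdef, div_lt_one hQmpos]; linarith
  obtain ⟨K, hK⟩ := exists_pow_lt_of_lt_one (half_pos hε) hc1
  refine ⟨m * K + m, fun n hn => ?_⟩
  have hmn : m ≤ n := by omega
  have hKle : K ≤ n / m := (Nat.le_div_iff_mul_le (by omega)).2 (by rw [mul_comm]; omega)
  set b := (Stmt4Aux.B p n m).card with hbdef
  have hbW : b ≤ (p + 2) ^ n := by
    rw [hbdef, ← Stmt4Aux.card_W p n]
    exact Finset.card_le_card (Finset.filter_subset _ _)
  have hb1 : b ≤ (p + 2) ^ (n - m) + ((p + 2) ^ m - 1) ^ (n / m) * (p + 2) ^ (n % m) :=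
    (Stmt4Aux.card_B p n m hmn).trans
      (Nat.add_le_add_left (Stmt4Aux.free_card p m hm1 n) _)
  have hcastpow : ∀ k : ℕ, (((p + 2) ^ k : ℕ) : ℝ) = Q ^ k := by
    intro k; rw [hQdef]; push_cast; ring
  have honele : 1 ≤ (p + 2) ^ m := Nat.one_le_pow _ _ (by omega)
  have hb1R : (b : ℝ) ≤ Q ^ (n - m) + (Q ^ m - 1) ^ (n / m) * Q ^ (n % m) := by
    have := (Nat.cast_le (α := ℝ)).2 hb1
    rwa [Nat.cast_add, Nat.cast_mul, hcastpow, hcastpow, Nat.cast_pow,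
      Nat.cast_sub honele, hcastpow, Nat.cast_one] at this
  have hQnpos : (0 : ℝ) < Q ^ n := by positivity
  have e1 : Q ^ (n - m) / Q ^ n = (1 / Q) ^ m := by
    rw [div_pow, one_pow, div_eq_div_iff (ne_of_gt hQnpos) (ne_of_gt hQmpos), one_mul, ← pow_add]
    congr 1
    omega
  have hQn_split : Q ^ n = (Q ^ m) ^ (n / m) * Q ^ (n % m) := by
    rw [← pow_mul, ← pow_add]
    congr 1
    exact (Nat.div_add_mod n m).symm
  have e2 : (Q ^ m - 1) ^ (n / m) * Q ^ (n % m) / Q ^ n = c ^ (n / m) := by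
    rw [hQn_split, hcdef, div_pow, mul_div_mul_right _ _ (by positivity)]
  have hbQ : (b : ℝ) / Q ^ n < ε := by
    have step1 : (b : ℝ) / Q ^ n ≤ (1 / Q) ^ m + c ^ (n / m) := by
      calc (b : ℝ) / Q ^ n
          ≤ (Q ^ (n - m) + (Q ^ m - 1) ^ (n / m) * Q ^ (n % m)) / Q ^ n :=
            (div_le_div_iff_of_pos_right hQnpos).2 hb1R
        _ = (1 / Q) ^ m + c ^ (n / m) := by rw [add_div, e1, e2]
    have step2 : c ^ (n / m) ≤ c ^ K := pow_le_pow_of_le_one hc0 (le_of_lt hc1) hKle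
    linarith
  -- lower bound on logb
  have hU0 : 0 < U n := lt_of_lt_of_le (Nat.two_pow_pos _) (hUge m n hm1 hmn)
  have hlog_lo : (Q ^ n - (b : ℝ)) ≤ Real.logb 2 (U n) := by
    have h2 : ((2 ^ ((p + 2) ^ n - b) : ℕ) : ℝ) ≤ (U n : ℝ) :=
      (Nat.cast_le (α := ℝ)).2 (hUge m n hm1 hmn)
    have h3 : ((2 ^ ((p + 2) ^ n - b) : ℕ) : ℝ) = (2 : ℝ) ^ ((p + 2) ^ n - b) := by
      push_cast; ring
    calc Q ^ n - (b : ℝ) = (((p + 2) ^ n - b : ℕ) : ℝ) := by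
          rw [Nat.cast_sub hbW, hcastpow]
      _ = Real.logb 2 ((2 : ℝ) ^ ((p + 2) ^ n - b)) := (hlogpow _).symm
      _ ≤ Real.logb 2 (U n) := by
          apply Real.logb_le_logb_of_le one_lt_two (by positivity)
          rw [← h3]
          exact h2
  have hL1 : Real.logb 2 (U n) / Q ^ n ≤ 1 := by
    rw [div_le_one hQnpos]
    exact hlog_up n
  have hL2 : 1 - ε < Real.logb 2 (U n) / Q ^ n := by
    have : (Q ^ n - (b : ℝ)) / Q ^ n ≤ Real.logb 2 (U n) / Q ^ n :=
      (div_le_div_iff_of_pos_right hQnpos).2 hlog_lo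
    rw [sub_div, div_self (ne_of_gt hQnpos)] at this
    linarith
  rw [Real.dist_eq, abs_lt]
  constructor <;> [linarith; linarith]
end

section
/- If S is an unavoidable set of patterns of length n over [m], then S contains at least one pattern from every conjugacy class of patterns of length n over [m] under cyclic rotation; in particular |S| ≥ T_p(n,m). -/
/-- `p` is a pattern: its set of letters is exactly `{1, ..., k}` for some `k ≥ 1`. -/
def IsPattern (p : List ℕ) : Prop :=
  ∃ k : ℕ, 1 ≤ k ∧ ∀ x : ℕ, x ∈ p ↔ (1 ≤ x ∧ x ≤ k)

/-- `p` is a pattern all of whose letters lie in `[m] = {1, ..., m}`. -/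
def PatternOver (m : ℕ) (p : List ℕ) : Prop :=
  IsPattern p ∧ ∀ x ∈ p, x ≤ m

/-- An `n`-pattern word over `[m]`: a word over `[m]` each of whose
contiguous subwords of length `n` is a pattern. -/
def IsNPatternWord (n m : ℕ) (w : List ℕ) : Prop :=
  (∀ x ∈ w, 1 ≤ x ∧ x ≤ m) ∧ ∀ u : List ℕ, u <:+: w → u.length = n → IsPattern u

/-- A set `S` of patterns of length `n` over `[m]` is unavoidable if the set of
`n`-pattern words over `[m]` containing no element of `S` as a subword is finite. -/
def UnavoidableP (n m : ℕ) (S : Set (List ℕ)) : Prop :=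
  {w : List ℕ | IsNPatternWord n m w ∧ ∀ s ∈ S, ¬ s <:+: w}.Finite

/-- `Tp n m`: the number of conjugacy classes (under cyclic rotation) of
patterns of length `n` over `[m]`. -/
noncomputable def Tp (n m : ℕ) : ℕ :=
  {C : Set (List ℕ) | ∃ p : List ℕ, p.length = n ∧ PatternOver m p ∧
    C = {q : List ℕ | p ~r q}}.ncard

/-! If `S` missed the rotation class of a pattern `p` of length `n`, the powers `p ^ k` would be
infinitely many `n`-pattern words avoiding `S`: every length-`n` subword of `p ^ k` is a rotation
of `p`, hence a pattern with the same letters. So `S` meets every class, and since `S` is finite,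
sending each of its elements to its class is a map from `S` onto the `T_p(n,m)` classes. -/

namespace List

variable {α : Type*}

theorem getElem_flatten_replicate (l : List α) (k i : ℕ)
    (h : i < (replicate k l).flatten.length) :
    (replicate k l).flatten[i] = l[i % l.length]'(Nat.mod_lt _ <| by
      rcases l with _ | _ <;> simp_all) := by
  induction k generalizing i with
  | zero => simp at h
  | succ k ih =>
    simp only [replicate_succ, flatten_cons, getElem_append]
    split_ifs with hi
    · simp [Nat.mod_eq_of_lt hi]
    · simp only [ih, ← Nat.mod_eq_sub_mod (not_lt.mp hi)]

theorem IsInfix.isRotated_of_flatten_replicate {l u : List α} {k : ℕ}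
    (hu : u <:+: (replicate k l).flatten) (hlen : u.length = l.length) : l ~r u := by
  obtain ⟨s, t, hw⟩ := hu
  refine ⟨s.length, ext_getElem (by simpa using hlen.symm) fun j hjl hj => ?_⟩
  have hj' : s.length + j < (s ++ u ++ t).length := by simp; omega
  calc (l.rotate s.length)[j] = l[(s.length + j) % l.length]'
        (Nat.mod_lt _ (by simp at hjl; omega)) := by
        simp [getElem_rotate, Nat.add_comm]
    _ = (s ++ u ++ t)[s.length + j] := by simp only [hw, getElem_flatten_replicate]
    _ = u[j] := by simp [append_assoc, getElem_append_right, getElem_append_left hj]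

theorem finite_length_eq_of_forall_mem {s : Set α} (hs : s.Finite) (n : ℕ) :
    {l : List α | l.length = n ∧ ∀ x ∈ l, x ∈ s}.Finite := by
  have := hs.to_subtype
  refine ((finite_length_eq s n).image (map Subtype.val)).subset ?_
  rintro l ⟨hlen, hmem⟩
  exact ⟨l.attachWith _ hmem, by simp [hlen], by simp⟩

end List

theorem IsPattern.ne_nil {p : List ℕ} (hp : IsPattern p) : p ≠ [] := by
  obtain ⟨k, hk, hmem⟩ := hp
  exact List.ne_nil_of_mem ((hmem 1).2 ⟨le_rfl, hk⟩)

theorem IsPattern.of_perm {p q : List ℕ} (hp : IsPattern p) (h : p.Perm q) : IsPattern q := by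
  obtain ⟨k, hk, hmem⟩ := hp
  exact ⟨k, hk, fun x => h.mem_iff.symm.trans (hmem x)⟩

theorem PatternOver.isNPatternWord_flatten_replicate {m : ℕ} {p : List ℕ} (hp : PatternOver m p)
    (k : ℕ) : IsNPatternWord p.length m (List.replicate k p).flatten := by
  refine ⟨fun x hx => ?_, fun u hu hlen =>
    IsPattern.of_perm hp.1 (hu.isRotated_of_flatten_replicate hlen).perm⟩
  obtain ⟨l, hl, hxl⟩ := List.mem_flatten.1 hx
  rw [List.eq_of_mem_replicate hl] at hxl
  obtain ⟨j, -, hmem⟩ := hp.1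
  exact ⟨((hmem x).1 hxl).1, hp.2 x hxl⟩

theorem UnavoidableP.exists_mem_isRotated {n m : ℕ} {S : Set (List ℕ)}
    (hunav : UnavoidableP n m S)
    (hS : ∀ s ∈ S, s.length = n) {p : List ℕ} (hlen : p.length = n) (hp : PatternOver m p) :
    ∃ s ∈ S, s ~r p := by
  by_contra! hnot
  have hpos : 0 < p.length := List.length_pos_iff.2 (IsPattern.ne_nil hp.1)
  have hinj : Function.Injective fun k => (List.replicate k p).flatten := fun a b hab => by
    simpa [hpos.ne'] using congrArg List.length hab
  refine absurd hunav <|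
    Set.infinite_of_injective_forall_mem hinj fun k => ⟨?_, fun s hs hsk => ?_⟩
  · exact hlen ▸ hp.isNPatternWord_flatten_replicate k
  · exact hnot s hs (hsk.isRotated_of_flatten_replicate (by rw [hS s hs, hlen])).symm

theorem Tp_le_ncard {n m : ℕ} {S : Set (List ℕ)} (hfin : S.Finite)
    (hS : ∀ p : List ℕ, p.length = n → PatternOver m p → ∃ s ∈ S, s ~r p) :
    Tp n m ≤ S.ncard :=
  calc Tp n m ≤ ((fun s => {q | s ~r q}) '' S).ncard := by
        refine Set.ncard_le_ncard ?_ (hfin.image _)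
        rintro _ ⟨p, hlen, hp, rfl⟩
        obtain ⟨s, hs, hsp⟩ := hS p hlen hp
        exact ⟨s, hs, Set.ext fun q => ⟨hsp.symm.trans, hsp.trans⟩⟩
    _ ≤ S.ncard := Set.ncard_image_le hfin

theorem stmt_6_general (n m : ℕ) (S : Set (List ℕ))
    (hS : ∀ p ∈ S, p.length = n ∧ PatternOver m p)
    (hunav : UnavoidableP n m S) :
    -- S meets every conjugacy class of patterns of length n over [m]
    (∀ p : List ℕ, p.length = n → PatternOver m p → ∃ s ∈ S, s ~r p) ∧
    -- in particular |S| ≥ T_p(n,m)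
    Tp n m ≤ S.ncard := by
  have hmeets : ∀ p : List ℕ, p.length = n → PatternOver m p → ∃ s ∈ S, s ~r p :=
    fun p hlen hp => hunav.exists_mem_isRotated (fun s hs => (hS s hs).1) hlen hp
  have hfin : S.Finite := (List.finite_length_eq_of_forall_mem (Set.finite_Iic m) n).subset
    fun s hs => ⟨(hS s hs).1, (hS s hs).2.2⟩
  exact ⟨hmeets, Tp_le_ncard hfin hmeets⟩

theorem stmt_6 (n m : ℕ) (hn : 1 ≤ n) (hm : 1 ≤ m) (S : Set (List ℕ))
    (hS : ∀ p ∈ S, p.length = n ∧ PatternOver m p)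
    (hunav : UnavoidableP n m S) :
    -- S meets every conjugacy class of patterns of length n over [m]
    (∀ p : List ℕ, p.length = n → PatternOver m p → ∃ s ∈ S, s ~r p) ∧
    -- in particular |S| ≥ T_p(n,m)
    Tp n m ≤ S.ncard :=
  stmt_6_general n m S hS hunav
end

section
/- For all n, m ≥ 1, M_p(n,m) = T_p(n,m). -/
open Finset Complex

noncomputable def zt (n : ℕ) : ℂ := Complex.exp ((2 * Real.pi / n) * Complex.I)

lemma zt_ne_zero (n : ℕ) : zt n ≠ 0 := Complex.exp_ne_zero _

lemma zt_pow_n {n : ℕ} (hn : 1 ≤ n) : zt n ^ n = 1 := by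
  rw [zt, ← Complex.exp_nat_mul]
  have hne : (n : ℂ) ≠ 0 := Nat.cast_ne_zero.2 (by omega)
  have : (n : ℂ) * (2 * (Real.pi : ℂ) / n * Complex.I) = 2 * Real.pi * Complex.I := by
    field_simp
  rw [this, Complex.exp_two_pi_mul_I]

lemma zt_ne_one {n : ℕ} (hn : 2 ≤ n) : zt n ≠ 1 := by
  intro h
  rw [zt, Complex.exp_eq_one_iff] at h
  obtain ⟨k, hk⟩ := h
  have hre : 2 * Real.pi / (n : ℝ) = (k : ℝ) * (2 * Real.pi) := by
    have := congrArg Complex.im hk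
    simpa using this
  have hpi := Real.pi_pos
  have hn0 : (0:ℝ) < n := by
    have : (2:ℝ) ≤ n := by exact_mod_cast hn
    linarith
  have h1 : 0 < 2 * Real.pi / (n : ℝ) := by positivity
  rcases le_or_gt (k : ℝ) 0 with hk0 | hk0
  · have h2 : (k:ℝ) * (2 * Real.pi) ≤ 0 := by nlinarith
    linarith
  · have hk1 : (1:ℝ) ≤ k := by
      have : (0:ℤ) < k := by exact_mod_cast hk0
      exact_mod_cast this
    have hn2 : (2:ℝ) ≤ n := by exact_mod_cast hn
    have h3 : 2 * Real.pi ≤ (k:ℝ) * (2 * Real.pi) := by nlinarith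
    have h4 : 2 * Real.pi / (n : ℝ) ≤ Real.pi := by
      rw [div_le_iff₀ hn0]; nlinarith
    linarith

lemma zt_geom {n : ℕ} (hn : 2 ≤ n) : ∑ r ∈ range n, zt n ^ r = 0 := by
  rw [geom_sum_eq (zt_ne_one hn), zt_pow_n (by omega), sub_self, zero_div]

lemma zt_pow_mod {n : ℕ} (hn : 1 ≤ n) (k : ℕ) : zt n ^ k = zt n ^ (k % n) := by
  conv_lhs => rw [← Nat.div_add_mod k n, pow_add, pow_mul, zt_pow_n hn, one_pow, one_mul]

/-- `N`-predicate: `z` is in the lower half plane, or on the negative real axis. -/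
def NIm (z : ℂ) : Prop := z.im < 0 ∨ (z.im = 0 ∧ z.re < 0)

/-- The selector sector: `arg z ∈ [-2π/n, 0)`. -/
def InSig (n : ℕ) (z : ℂ) : Prop := NIm z ∧ 0 ≤ (zt n * z).im

noncomputable def Wf (n : ℕ) (y : ℕ → ℕ) (t : ℕ) : ℂ :=
  ∑ r ∈ range n, (y (t + r) : ℂ) * zt n ^ r

lemma Wf_key {n : ℕ} (hn : 1 ≤ n) (y : ℕ → ℕ) (t : ℕ) :
    zt n * Wf n y (t + 1) = Wf n y t - (y t : ℂ) + (y (t + n) : ℂ) := by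
  have h1 : zt n * Wf n y (t + 1)
      = ∑ r ∈ range n, (y (t + (r + 1)) : ℂ) * zt n ^ (r + 1) := by
    rw [Wf, Finset.mul_sum]
    refine Finset.sum_congr rfl fun r _ => ?_
    have : t + 1 + r = t + (r + 1) := by omega
    rw [this]; ring
  have h2 : ∑ r ∈ range (n + 1), (y (t + r) : ℂ) * zt n ^ r
      = (∑ r ∈ range n, (y (t + (r + 1)) : ℂ) * zt n ^ (r + 1)) + (y (t + 0) : ℂ) * zt n ^ 0 :=
    Finset.sum_range_succ' _ n
  have h3 : ∑ r ∈ range (n + 1), (y (t + r) : ℂ) * zt n ^ r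
      = (∑ r ∈ range n, (y (t + r) : ℂ) * zt n ^ r) + (y (t + n) : ℂ) * zt n ^ n :=
    Finset.sum_range_succ _ n
  rw [h1]
  have := h2.symm.trans h3
  rw [Wf]
  rw [zt_pow_n hn] at this
  simp only [add_zero, pow_zero, mul_one] at this
  linear_combination this

lemma core_period {n : ℕ} (hn : 2 ≤ n) {L : ℕ} (hL : 0 < L) (y : ℕ → ℕ)
    (hper : ∀ t, y (t + L) = y t)
    (hav : ∀ t, ¬ InSig n (Wf n y t)) :
    ∀ t, y (t + n) = y t := by
  have hn1 : 1 ≤ n := by omega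
  -- im of the key identity
  have imkey : ∀ t, (zt n * Wf n y (t + 1)).im = (Wf n y t).im := by
    intro t
    rw [Wf_key hn1]
    simp
  -- negativity propagates backward
  have step1 : ∀ t, (Wf n y (t + 1)).im < 0 → (Wf n y t).im < 0 := by
    intro t h
    by_contra h2
    push_neg at h2
    exact hav (t + 1) ⟨Or.inl h, by rw [imkey]; exact h2⟩
  have back : ∀ d t, (Wf n y (t + d)).im < 0 → (Wf n y t).im < 0 := by
    intro d
    induction d with
    | zero => intro t h; simpa using h
    | succ d ih =>
      intro t h
      have : t + (d + 1) = (t + d) + 1 := by omega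
      rw [this] at h
      exact ih t (step1 (t + d) h)
  -- periodicity of Wf
  have hperk : ∀ k t, y (t + k * L) = y t := by
    intro k
    induction k with
    | zero => simp
    | succ k ih =>
      intro t
      have : t + (k + 1) * L = (t + k * L) + L := by ring
      rw [this, hper, ih]
  have Wfper : ∀ t, Wf n y (t + L) = Wf n y t := by
    intro t
    unfold Wf
    refine Finset.sum_congr rfl fun r _ => ?_
    have : t + L + r = (t + r) + L := by omega
    rw [this, hper]
  have WfperK : ∀ k t, Wf n y (t + k * L) = Wf n y t := by
    intro k
    induction k with
    | zero => simp
    | succ k ih =>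
      intro t
      have : t + (k + 1) * L = (t + k * L) + L := by ring
      rw [this, Wfper, ih]
  -- sum over one period is zero
  have shift_sum : ∀ r, (∑ t ∈ range L, (y (t + r) : ℂ)) = ∑ t ∈ range L, (y t : ℂ) := by
    intro r
    induction r with
    | zero => simp
    | succ r ih =>
      have key2 : (∑ t ∈ range L, (y ((t + 1) + r) : ℂ)) = ∑ t ∈ range L, (y (t + r) : ℂ) := by
        have e1 : ∑ t ∈ range (L + 1), (y (t + r) : ℂ)
            = (∑ t ∈ range L, (y ((t + 1) + r) : ℂ)) + (y (0 + r) : ℂ) :=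
          Finset.sum_range_succ' _ L
        have e2 : ∑ t ∈ range (L + 1), (y (t + r) : ℂ)
            = (∑ t ∈ range L, (y (t + r) : ℂ)) + (y (L + r) : ℂ) :=
          Finset.sum_range_succ _ L
        have e3 : y (L + r) = y (0 + r) := by
          have : L + r = (0 + r) + L := by omega
          rw [this, hper]
        rw [e3] at e2
        have := e1.symm.trans e2
        linear_combination this
      calc (∑ t ∈ range L, (y (t + (r + 1)) : ℂ))
          = ∑ t ∈ range L, (y ((t + 1) + r) : ℂ) := by
            refine Finset.sum_congr rfl fun t _ => ?_
            have : t + (r + 1) = (t + 1) + r := by omega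
            rw [this]
        _ = ∑ t ∈ range L, (y (t + r) : ℂ) := key2
        _ = ∑ t ∈ range L, (y t : ℂ) := ih
  have sum0 : ∑ t ∈ range L, Wf n y t = 0 := by
    unfold Wf
    rw [Finset.sum_comm]
    have : ∀ r ∈ range n, ∑ t ∈ range L, (y (t + r) : ℂ) * zt n ^ r
        = (∑ t ∈ range L, (y t : ℂ)) * zt n ^ r := by
      intro r _
      rw [← Finset.sum_mul, shift_sum]
    rw [Finset.sum_congr rfl this, ← Finset.mul_sum, zt_geom hn, mul_zero]
  -- no window has negative imaginary part
  have noneg : ∀ t, 0 ≤ (Wf n y t).im := by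
    by_contra h
    push_neg at h
    obtain ⟨t0, ht0⟩ := h
    have allneg : ∀ t, (Wf n y t).im < 0 := by
      intro t
      have hle : t ≤ t0 + (t + 1) * L := by nlinarith [hL]
      obtain ⟨d, hd⟩ := Nat.exists_eq_add_of_le hle
      have : (Wf n y (t + d)).im < 0 := by
        have e : t + d = t0 + (t + 1) * L := by omega
        rw [e, WfperK]
        exact ht0
      exact back d t this
    have hsum : (∑ t ∈ range L, Wf n y t).im = 0 := by rw [sum0]; simp
    rw [Complex.im_sum] at hsum
    have : (∑ t ∈ range L, (Wf n y t).im) < 0 :=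
      Finset.sum_neg (fun t _ => allneg t) (by simpa using Finset.nonempty_range_iff.2 (by omega))
    linarith
  -- all imaginary parts vanish
  have imzero : ∀ t, (Wf n y t).im = 0 := by
    have hL0 : ∀ t ∈ range L, (Wf n y t).im = 0 := by
      have hsum : (∑ t ∈ range L, (Wf n y t).im) = 0 := by
        rw [← Complex.im_sum, sum0]; simp
      intro t ht
      have := (Finset.sum_eq_zero_iff_of_nonneg (fun t _ => noneg t)).1 hsum
      exact this t ht
    intro t
    have e : t % L + (t / L) * L = t := Nat.mod_add_div' t L
    have : Wf n y t = Wf n y (t % L) := by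
      conv_lhs => rw [← e]
      rw [WfperK]
    rw [this]
    exact hL0 (t % L) (Finset.mem_range.2 (Nat.mod_lt t hL))
  -- hence all real parts are nonnegative
  have renoneg : ∀ t, 0 ≤ (Wf n y t).re := by
    intro t
    by_contra hneg
    push_neg at hneg
    have him : (zt n * Wf n y t).im = 0 := by
      rcases t with _ | s
      · have e2 : Wf n y 0 = Wf n y ((L - 1) + 1) := by
          have e3 : (L - 1) + 1 = 0 + L := by omega
          rw [e3, Wfper]
        rw [e2, imkey, imzero]
      · rw [imkey, imzero]
    exact hav t ⟨Or.inr ⟨imzero t, hneg⟩, le_of_eq him.symm⟩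
  -- all real parts vanish
  have rezero : ∀ t, (Wf n y t).re = 0 := by
    have hL0 : ∀ t ∈ range L, (Wf n y t).re = 0 := by
      have hsum : (∑ t ∈ range L, (Wf n y t).re) = 0 := by
        rw [← Complex.re_sum, sum0]; simp
      exact fun t ht => (Finset.sum_eq_zero_iff_of_nonneg (fun s _ => renoneg s)).1 hsum t ht
    intro t
    have e : t % L + (t / L) * L = t := Nat.mod_add_div' t L
    have h2 : Wf n y t = Wf n y (t % L) := by
      conv_lhs => rw [← e]
      rw [WfperK]
    rw [h2]
    exact hL0 _ (Finset.mem_range.2 (Nat.mod_lt t hL))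
  have Wzero : ∀ t, Wf n y t = 0 := by
    intro t
    have h1 := rezero t
    have h2 := imzero t
    exact Complex.ext h1 h2
  intro t
  have hkey := Wf_key hn1 y t
  rw [Wzero, Wzero, mul_zero] at hkey
  have : (y (t + n) : ℂ) = (y t : ℂ) := by linear_combination -hkey
  exact_mod_cast this

lemma zt_eq (n : ℕ) : zt n = Complex.exp (((2 * Real.pi / (n:ℝ) : ℝ) : ℂ) * Complex.I) := by
  rw [zt]; norm_num

lemma zt_abs (n : ℕ) : ‖zt n‖ = 1 := by
  rw [zt_eq]; exact Complex.norm_exp_ofReal_mul_I _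

lemma zt_im (n : ℕ) : (zt n).im = Real.sin (2 * Real.pi / n) := by
  rw [zt_eq]; exact Complex.exp_ofReal_mul_I_im _

lemma zt_re (n : ℕ) : (zt n).re = Real.cos (2 * Real.pi / n) := by
  rw [zt_eq]; exact Complex.exp_ofReal_mul_I_re _

lemma theta_pos {n : ℕ} (hn : 2 ≤ n) : 0 < 2 * Real.pi / n := by
  have := Real.pi_pos
  have hn0 : (0:ℝ) < n := by
    have : (2:ℝ) ≤ n := by exact_mod_cast hn
    linarith
  positivity

lemma theta_lt_pi {n : ℕ} (hn : 3 ≤ n) : 2 * Real.pi / n < Real.pi := by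
  have hpi := Real.pi_pos
  have hn3 : (3:ℝ) ≤ n := by exact_mod_cast hn
  rw [div_lt_iff₀ (by linarith)]
  nlinarith

lemma zt_two : zt 2 = -1 := by
  rw [zt_eq]
  have : (2 * Real.pi / ((2:ℕ):ℝ)) = Real.pi := by norm_num
  rw [this]
  exact Complex.exp_pi_mul_I

/-- A member of the sector has argument in `[-2π/n, 0)`. -/
lemma arg_insig {n : ℕ} (hn : 3 ≤ n) {w : ℂ} (h : InSig n w) :
    w ≠ 0 ∧ -(2 * Real.pi / n) ≤ Complex.arg w ∧ Complex.arg w < 0 := by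
  set θ : ℝ := 2 * Real.pi / n with hθ
  have hθpos : 0 < θ := theta_pos (by omega)
  have hθpi : θ < Real.pi := theta_lt_pi hn
  have hsinθ : 0 < Real.sin θ := Real.sin_pos_of_pos_of_lt_pi hθpos hθpi
  have him : w.im < 0 := by
    rcases h.1 with h1 | ⟨h1, h2⟩
    · exact h1
    · exfalso
      have : (zt n * w).im = Real.sin θ * w.re := by
        rw [Complex.mul_im, h1, zt_im, zt_re, ← hθ]; ring
      have := h.2
      nlinarith
  have hne : w ≠ 0 := by
    intro h0; rw [h0] at him; simp at him
  refine ⟨hne, ?_, Complex.arg_neg_iff.2 him⟩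
  by_contra harg
  push_neg at harg
  have hgt := Complex.neg_pi_lt_arg w
  have hw := Complex.norm_mul_exp_arg_mul_I w
  have e1 : zt n * w = ↑‖w‖ * Complex.exp (↑(θ + Complex.arg w) * Complex.I) := by
    conv_lhs => rw [← hw, zt_eq]
    rw [Complex.ofReal_add, add_mul, Complex.exp_add]
    ring
  have him2 : (zt n * w).im = ‖w‖ * Real.sin (θ + Complex.arg w) := by
    rw [e1, Complex.mul_im, Complex.exp_ofReal_mul_I_im, Complex.exp_ofReal_mul_I_re]
    simp
  have hsin : Real.sin (θ + Complex.arg w) < 0 := by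
    apply Real.sin_neg_of_neg_of_neg_pi_lt
    · linarith
    · linarith
  have habs : 0 < ‖w‖ := norm_pos_iff.2 hne
  have := h.2
  nlinarith

lemma zt_pow_eq (n k : ℕ) :
    zt n ^ k = Complex.exp (((((k:ℝ) * (2 * Real.pi / n)) : ℝ) : ℂ) * Complex.I) := by
  rw [zt_eq, ← Complex.exp_nat_mul]
  congr 1
  push_cast
  ring

lemma sig_unique {n : ℕ} (hn : 2 ≤ n) {z : ℂ} {k : ℕ} (hk : k < n)
    (h1 : InSig n z) (h2 : InSig n (zt n ^ k * z)) : k = 0 := by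
  rcases eq_or_lt_of_le hn with h2eq | h3
  · -- n = 2
    subst h2eq
    interval_cases k
    · rfl
    · exfalso
      have ha := h1.2
      have hb := h2.2
      have hc := h2.1
      rw [pow_one, zt_two] at hb hc
      rw [zt_two] at ha
      have him1 : z.im ≤ 0 := by
        have : ((-1 : ℂ) * z).im = -z.im := by simp
        rw [this] at ha
        linarith
      have him2 : 0 ≤ z.im := by
        have : ((-1 : ℂ) * (-1 * z)).im = z.im := by simp
        rw [this] at hb
        exact hb
      have him0 : z.im = 0 := le_antisymm him1 him2
      have hre1 : z.re < 0 := by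
        rcases h1.1 with h | ⟨_, h⟩
        · linarith
        · exact h
      have hre2 : -z.re < 0 := by
        rcases hc with h | ⟨_, h⟩
        · simp at h; linarith
        · simpa using h
      linarith
  · -- n ≥ 3
    have hn3 : 3 ≤ n := h3
    set θ : ℝ := 2 * Real.pi / n with hθ
    have hθpos : 0 < θ := theta_pos hn
    obtain ⟨hne, hα1, hα2⟩ := arg_insig hn3 h1
    obtain ⟨hne', hβ1, hβ2⟩ := arg_insig hn3 h2
    set α := Complex.arg z with hαdef
    set β := Complex.arg (zt n ^ k * z) with hβdef
    have habs : ‖zt n ^ k * z‖ = ‖z‖ := by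
      rw [norm_mul, norm_pow, zt_abs, one_pow, one_mul]
    have e1 : zt n ^ k * z = ↑‖z‖ * Complex.exp (↑((k:ℝ) * θ + α) * Complex.I) := by
      conv_lhs => rw [← Complex.norm_mul_exp_arg_mul_I z, zt_pow_eq]
      rw [← hαdef, ← hθ, mul_left_comm, ← Complex.exp_add, Complex.ofReal_add, add_mul]
    have e2 : zt n ^ k * z = ↑‖z‖ * Complex.exp (↑β * Complex.I) := by
      conv_lhs => rw [← Complex.norm_mul_exp_arg_mul_I (zt n ^ k * z)]
      rw [habs]
    have habsne : (↑‖z‖ : ℂ) ≠ 0 := by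
      have : ‖z‖ ≠ 0 := norm_ne_zero_iff.2 hne
      exact_mod_cast this
    have eexp : Complex.exp (↑((k:ℝ) * θ + α) * Complex.I) = Complex.exp (↑β * Complex.I) :=
      mul_left_cancel₀ habsne (e1.symm.trans e2)
    rw [Complex.exp_eq_exp_iff_exists_int] at eexp
    obtain ⟨j, hj⟩ := eexp
    have hreal : (k:ℝ) * θ + α = β + j * (2 * Real.pi) := by
      have := congrArg Complex.im hj
      simpa using this
    -- |kθ - 2πj| < θ  ⇒  k = jn
    have hθn : θ * n = 2 * Real.pi := by
      rw [hθ]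
      field_simp
    have hb1 : (k:ℝ) * θ - j * (2 * Real.pi) < θ := by linarith
    have hb2 : -θ < (k:ℝ) * θ - j * (2 * Real.pi) := by linarith
    rw [← hθn] at hb1 hb2
    have hkjn1 : ((k:ℝ) - j * n) * θ < 1 * θ := by nlinarith
    have hkjn2 : (-1 : ℝ) * θ < ((k:ℝ) - j * n) * θ := by nlinarith
    have hik1 : (k:ℝ) - j * n < 1 := by
      have := (mul_lt_mul_iff_of_pos_right hθpos).1 hkjn1
      linarith
    have hik2 : (-1:ℝ) < (k:ℝ) - j * n := by
      have := (mul_lt_mul_iff_of_pos_right hθpos).1 hkjn2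
      linarith
    have hint : (k : ℤ) - j * n = 0 := by
      have h1' : ((k : ℤ) - j * n : ℝ) < 1 := by push_cast; linarith
      have h2' : (-1 : ℝ) < ((k : ℤ) - j * n : ℝ) := by push_cast; linarith
      have : (k : ℤ) - j * n < 1 := by exact_mod_cast h1'
      have : (-1 : ℤ) < (k : ℤ) - j * n := by exact_mod_cast h2'
      omega
    -- k = j * n with 0 ≤ k < n forces k = 0
    have hkze : (k : ℤ) = j * n := by omega
    have hnz : (2 : ℤ) ≤ n := by exact_mod_cast hn
    have hkz : (k : ℤ) < n := by exact_mod_cast hk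
    have hj0 : j = 0 := by
      rcases lt_trichotomy j 0 with hj' | hj' | hj'
      · nlinarith [hkze, (Nat.cast_nonneg k : (0:ℤ) ≤ k)]
      · exact hj'
      · nlinarith [hkze]
    rw [hj0] at hkze
    simpa using hkze

/-- window of length `n` of the function `y` starting at `t` -/
def win (n : ℕ) (y : ℕ → ℕ) (t : ℕ) : List ℕ := (List.range n).map fun r => y (t + r)

@[simp] lemma win_length (n : ℕ) (y : ℕ → ℕ) (t : ℕ) : (win n y t).length = n := by
  simp [win]

lemma win_getD (n : ℕ) (y : ℕ → ℕ) (t : ℕ) {j : ℕ} (hj : j < n) :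
    (win n y t).getD j 0 = y (t + j) := by
  rw [List.getD_eq_getElem _ _ (by simpa using hj)]
  simp [win]

lemma win_congr {n : ℕ} {y y' : ℕ → ℕ} {t t' : ℕ}
    (h : ∀ r < n, y (t + r) = y' (t' + r)) : win n y t = win n y' t' := by
  unfold win
  apply List.map_congr_left
  intro r hr
  exact h r (List.mem_range.1 hr)

/-- every list is the window of its own getD function -/
lemma self_eq_win (w : List ℕ) : w = win w.length (fun t => w.getD t 0) 0 := by
  apply List.ext_getElem (by simp)
  intro j h1 h2
  simp only [win, List.getElem_map, List.getElem_range]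
  rw [zero_add, List.getD_eq_getElem _ _ h1]

/-- an infix of length n of a window-representable list is a window -/
lemma infix_win {n M : ℕ} {y : ℕ → ℕ} {u : List ℕ}
    (hu : u <:+: win M y 0) (hlen : u.length = n) :
    ∃ i, i + n ≤ M ∧ u = win n y i := by
  obtain ⟨s, t, hst⟩ := hu
  refine ⟨s.length, ?_, ?_⟩
  · have := congrArg List.length hst
    simp [hlen] at this
    omega
  · have hlen2 : s.length + n ≤ M := by
      have := congrArg List.length hst
      simp [hlen] at this
      omega
    apply List.ext_getElem (by simp [hlen])
    intro j hj1 hj2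
    have hj : j < n := by simpa [hlen] using hj1
    have hM : (s ++ u ++ t).length = M := by rw [hst]; simp
    have hidx : s.length + j < (s ++ u ++ t).length := by
      simp only [List.length_append]
      simp [hlen] at hM
      omega
    have e2 : (s ++ u ++ t)[s.length + j]'hidx = y (s.length + j) := by
      rw [List.getElem_of_eq hst]
      simp [win]
    have e3 : (s ++ u ++ t)[s.length + j]'hidx = u[j]'hj1 := by
      have h1 : s.length + j < (s ++ u).length := by simp [hlen]; omega
      rw [List.getElem_append_left h1]
      have h2 : s.length ≤ s.length + j := by omega
      rw [List.getElem_append_right h2]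
      congr 1
      omega
    rw [← e3, e2]
    simp [win]

lemma win_is_infix {n : ℕ} {w : List ℕ} {i : ℕ} (h : i + n ≤ w.length) :
    win n (fun t => w.getD t 0) i <:+: w := by
  have e : win n (fun t => w.getD t 0) i = (w.drop i).take n := by
    apply List.ext_getElem (by simp; omega)
    intro j hj1 hj2
    have hj : j < n := by simpa using hj1
    simp only [win, List.getElem_map, List.getElem_range, List.getElem_take, List.getElem_drop]
    rw [List.getD_eq_getElem _ _ (by omega)]
  rw [e]
  exact ((w.drop i).take_prefix n).isInfix.trans (w.drop_suffix i).isInfix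

lemma per_mod {y : ℕ → ℕ} {P : ℕ} (hP : 0 < P) (h : ∀ t, y (t + P) = y t) :
    ∀ t, y t = y (t % P) := by
  intro t
  induction t using Nat.strong_induction_on with
  | _ t ih =>
    rcases lt_or_ge t P with h1 | h1
    · rw [Nat.mod_eq_of_lt h1]
    · have e : t = (t - P) + P := by omega
      rw [e, h, ih (t - P) (by omega)]
      congr 1
      exact (Nat.add_mod_right _ _).symm

lemma win_mod {n : ℕ} {y : ℕ → ℕ} {P : ℕ} (hP : 0 < P) (h : ∀ t, y (t + P) = y t) (t : ℕ) :
    win n y t = win n y (t % P) := by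
  apply win_congr
  intro r _
  rw [per_mod hP h (t + r), per_mod hP h (t % P + r)]
  congr 1
  rw [Nat.add_mod, Nat.add_mod (t % P) r, Nat.mod_mod]

lemma win_rotate {n : ℕ} (hn : 0 < n) {y : ℕ → ℕ} (hyper : ∀ t, y (t + n) = y t) (s : ℕ) :
    (win n y 0).rotate s = win n y s := by
  have h1 : (win n y 0).rotate s = (win n y 0).rotate (s % n) := by
    rw [← List.rotate_mod (win n y 0) s, win_length]
  rw [h1, win_mod hn hyper s]
  apply List.ext_getElem (by simp)
  intro j hj1 hj2
  rw [List.getElem_rotate]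
  simp only [win, List.getElem_map, List.getElem_range, List.length_map, List.length_range,
    zero_add, Nat.mod_mod]
  rw [per_mod hn hyper (s % n + j)]
  congr 1
  conv_lhs => rw [Nat.add_mod, Nat.mod_mod]
  conv_rhs => rw [Nat.add_mod]
  rw [Nat.mod_mod, Nat.add_comm (j % n)]

/-- a list of length n as window of its mod-n periodic extension -/
lemma self_eq_win_mod {n : ℕ} {l : List ℕ} (hl : l.length = n) (hn : 0 < n) :
    l = win n (fun t => l.getD (t % n) 0) 0 := by
  apply List.ext_getElem (by simp [hl])
  intro j hj1 hj2
  simp only [win, List.getElem_map, List.getElem_range, zero_add]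
  rw [Nat.mod_eq_of_lt (by omega), List.getD_eq_getElem _ _ hj1]


noncomputable def Wt (n : ℕ) (l : List ℕ) : ℂ :=
  ∑ j ∈ Finset.range n, (l.getD j 0 : ℂ) * zt n ^ j

lemma Wt_win (n : ℕ) (y : ℕ → ℕ) (t : ℕ) : Wt n (win n y t) = Wf n y t := by
  unfold Wt Wf
  refine Finset.sum_congr rfl fun j hj => ?_
  rw [win_getD _ _ _ (Finset.mem_range.1 hj)]

lemma Wt_rotate {n : ℕ} (hn : 1 ≤ n) {l : List ℕ} (hl : l.length = n) (s : ℕ) :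
    zt n ^ s * Wt n (l.rotate s) = Wt n l := by
  set y : ℕ → ℕ := fun t => l.getD (t % n) 0 with hy
  have hyper : ∀ t, y (t + n) = y t := by
    intro t
    simp only [hy, Nat.add_mod_right]
  have hl2 : l = win n y 0 := self_eq_win_mod hl (by omega)
  have hrot : l.rotate s = win n y s := by rw [hl2, win_rotate (by omega) hyper]
  have hWstep : ∀ t, zt n * Wf n y (t + 1) = Wf n y t := by
    intro t
    rw [Wf_key hn, hyper]
    ring
  have hWs : ∀ t, zt n ^ t * Wf n y t = Wf n y 0 := by
    intro t
    induction t with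
    | zero => simp
    | succ t ih =>
      rw [pow_succ]
      calc zt n ^ t * zt n * Wf n y (t + 1) = zt n ^ t * (zt n * Wf n y (t + 1)) := by ring
        _ = zt n ^ t * Wf n y t := by rw [hWstep]
        _ = Wf n y 0 := ih
  rw [hrot, Wt_win, hWs s, ← Wt_win n y 0, ← hl2]


/-- the set of conjugacy classes of patterns of length `n` over `[m]` -/
def PClasses (n m : ℕ) : Set (Set (List ℕ)) :=
  {C : Set (List ℕ) | ∃ p : List ℕ, p.length = n ∧ PatternOver m p ∧
    C = {q : List ℕ | p ~r q}}

lemma Tp_eq (n m : ℕ) : Tp n m = (PClasses n m).ncard := rfl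

lemma rotate_pattern {p : List ℕ} (h : IsPattern p) (s : ℕ) : IsPattern (p.rotate s) := by
  obtain ⟨k, hk, hiff⟩ := h
  exact ⟨k, hk, fun x => by rw [List.mem_rotate]; exact hiff x⟩

lemma class_elem_props {n m : ℕ} {C : Set (List ℕ)} (hC : C ∈ PClasses n m)
    {q : List ℕ} (hq : q ∈ C) : q.length = n ∧ PatternOver m q := by
  obtain ⟨p, hlen, hpat, rfl⟩ := hC
  obtain ⟨s, rfl⟩ := hq
  refine ⟨by rw [List.length_rotate]; exact hlen, ?_, ?_⟩
  · exact rotate_pattern hpat.1 s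
  · intro x hx
    exact hpat.2 x (List.mem_rotate.1 hx)

lemma class_nonempty {n m : ℕ} {C : Set (List ℕ)} (hC : C ∈ PClasses n m) : C.Nonempty := by
  obtain ⟨p, _, _, rfl⟩ := hC
  exact ⟨p, List.IsRotated.refl p⟩

lemma class_eq {n m : ℕ} {C C' : Set (List ℕ)} (hC : C ∈ PClasses n m) (hC' : C' ∈ PClasses n m)
    {q : List ℕ} (hq : q ∈ C) (hq' : q ∈ C') : C = C' := by
  obtain ⟨p, _, _, rfl⟩ := hC
  obtain ⟨p', _, _, rfl⟩ := hC'
  have h1 : p ~r q := hq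
  have h2 : p' ~r q := hq'
  ext r
  constructor
  · intro hr
    exact (h2.trans (h1.symm.trans hr) : p' ~r r)
  · intro hr
    exact (h1.trans (h2.symm.trans hr) : p ~r r)

/-- bounded-length lists over a bounded alphabet form a finite set -/
lemma finite_bounded_lists (m N : ℕ) :
    {l : List ℕ | l.length ≤ N ∧ ∀ x ∈ l, x ≤ m}.Finite := by
  have hfin : {l : List (Fin (m + 1)) | l.length ≤ N}.Finite := List.finite_length_le _ N
  have himg := hfin.image (fun l : List (Fin (m + 1)) => l.map Fin.val)
  apply Set.Finite.subset himg
  rintro l ⟨hlen, hbd⟩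
  refine ⟨l.map (fun x => (⟨min x m, by omega⟩ : Fin (m + 1))), by simpa using hlen, ?_⟩
  show List.map Fin.val (l.map _) = l
  rw [List.map_map]
  conv_rhs => rw [← List.map_id l]
  apply List.map_congr_left
  intro x hx
  have := hbd x hx
  simp [Function.comp, min_eq_left this]

lemma PClasses_finite (n m : ℕ) : (PClasses n m).Finite := by
  have hsrc := finite_bounded_lists m n
  have himg := hsrc.image (fun p : List ℕ => {q : List ℕ | p ~r q})
  apply Set.Finite.subset himg
  rintro C ⟨p, hlen, hpat, rfl⟩
  exact ⟨p, ⟨le_of_eq hlen, hpat.2⟩, rfl⟩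

open Classical in
/-- representative of a class: the sector element if present, else any element -/
noncomputable def repC (n : ℕ) (C : Set (List ℕ)) : List ℕ :=
  if h : ∃ q, q ∈ C ∧ InSig n (Wt n q) then h.choose
  else if h2 : C.Nonempty then h2.some else []

lemma repC_mem {n m : ℕ} {C : Set (List ℕ)} (hC : C ∈ PClasses n m) : repC n C ∈ C := by
  classical
  unfold repC
  split_ifs with h h2
  · exact h.choose_spec.1
  · exact h2.some_mem
  · exact absurd (class_nonempty hC) h2

noncomputable def SFin (n m : ℕ) : Finset (List ℕ) :=
  (PClasses_finite n m).toFinset.image (repC n)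

lemma repC_mem_SFin {n m : ℕ} {C : Set (List ℕ)} (hC : C ∈ PClasses n m) :
    repC n C ∈ SFin n m :=
  Finset.mem_image_of_mem _ ((Set.Finite.mem_toFinset _).2 hC)

lemma SFin_props {n m : ℕ} : ∀ p ∈ SFin n m, p.length = n ∧ PatternOver m p := by
  intro p hp
  obtain ⟨C, hC, rfl⟩ := Finset.mem_image.1 hp
  have hC' := (Set.Finite.mem_toFinset _).1 hC
  exact class_elem_props hC' (repC_mem hC')

lemma SFin_card (n m : ℕ) : (SFin n m).card = Tp n m := by
  rw [Tp_eq, SFin]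
  rw [Finset.card_image_of_injOn, Set.ncard_eq_toFinset_card _ (PClasses_finite n m)]
  intro C hC C' hC' heq
  have hC1 := (Set.Finite.mem_toFinset _).1 hC
  have hC1' := (Set.Finite.mem_toFinset _).1 hC'
  exact class_eq hC1 hC1' (repC_mem hC1) (heq ▸ repC_mem hC1')

lemma mem_SFin_of_sig {n m : ℕ} (hn : 2 ≤ n) {p : List ℕ} (hlen : p.length = n)
    (hpat : PatternOver m p) (hsig : InSig n (Wt n p)) : p ∈ SFin n m := by
  classical
  have hC : {q : List ℕ | p ~r q} ∈ PClasses n m := ⟨p, hlen, hpat, rfl⟩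
  have hex : ∃ q, q ∈ {q : List ℕ | p ~r q} ∧ InSig n (Wt n q) :=
    ⟨p, List.IsRotated.refl p, hsig⟩
  have hrep : repC n {q : List ℕ | p ~r q} = hex.choose := by
    unfold repC
    rw [dif_pos hex]
  obtain ⟨hq1, hq2⟩ := hex.choose_spec
  obtain ⟨s, hs⟩ := (hq1 : p ~r hex.choose)
  have hWt : zt n ^ s * Wt n hex.choose = Wt n p := by
    rw [← hs]
    exact Wt_rotate (by omega) hlen s
  have hmod : zt n ^ (s % n) * Wt n hex.choose = Wt n p := by
    rw [← zt_pow_mod (by omega) s]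
    exact hWt
  have hk0 : s % n = 0 := sig_unique hn (Nat.mod_lt _ (by omega)) hq2 (by rw [hmod]; exact hsig)
  have hpp : p.rotate s = p := by
    rw [← List.rotate_mod, hlen, hk0, List.rotate_zero]
  have : repC n {q : List ℕ | p ~r q} = p := by rw [hrep, ← hs, hpp]
  rw [← this]
  exact repC_mem_SFin hC

lemma avoid_length_bound {n m : ℕ} (hn : 2 ≤ n) {w : List ℕ}
    (hw : IsNPatternWord n m w) (hav : ∀ s ∈ SFin n m, ¬ s <:+: w) :
    w.length < (m + 1) ^ n + n := by
  by_contra hlong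
  push_neg at hlong
  set x : ℕ → ℕ := fun t => w.getD t 0 with hx
  have hxbd : ∀ t, t < w.length → x t ≤ m := by
    intro t ht
    have hmem : w.getD t 0 ∈ w := by
      rw [List.getD_eq_getElem _ _ ht]
      exact List.getElem_mem _
    exact (hw.1 _ hmem).2
  have hcard : Fintype.card (Fin n → Fin (m + 1)) < Fintype.card (Fin ((m + 1) ^ n + 1)) := by
    rw [Fintype.card_fun]
    simp
  have hidx : ∀ (j : Fin ((m + 1) ^ n + 1)) (r : Fin n), (j : ℕ) + (r : ℕ) < w.length := by
    intro j r
    have h1 := j.isLt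
    have h2 := r.isLt
    omega
  obtain ⟨j, j', hne, heq⟩ := Fintype.exists_ne_map_eq_of_card_lt
    (fun (j : Fin ((m + 1) ^ n + 1)) (r : Fin n) =>
      (⟨x ((j : ℕ) + (r : ℕ)), Nat.lt_succ_of_le (hxbd _ (hidx j r))⟩ : Fin (m + 1))) hcard
  have hkey : ∃ i L, 0 < L ∧ i + L ≤ (m + 1) ^ n ∧ ∀ r < n, x (i + r) = x (i + L + r) := by
    have hvals : ∀ r < n, x ((j : ℕ) + r) = x ((j' : ℕ) + r) := by
      intro r hr
      have := congrFun heq ⟨r, hr⟩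
      simpa using this
    rcases lt_or_gt_of_ne (fun h => hne (Fin.ext h) : (j : ℕ) ≠ (j' : ℕ)) with h | h
    · refine ⟨j, (j' : ℕ) - j, by omega, by have := j'.isLt; omega, ?_⟩
      intro r hr
      have e : (j : ℕ) + ((j' : ℕ) - j) + r = (j' : ℕ) + r := by omega
      rw [e]
      exact hvals r hr
    · refine ⟨j', (j : ℕ) - j', by omega, by have := j.isLt; omega, ?_⟩
      intro r hr
      have e : (j' : ℕ) + ((j : ℕ) - j') + r = (j : ℕ) + r := by omega
      rw [e]
      exact (hvals r hr).symm
  obtain ⟨i, L, hL, hiL, heqw⟩ := hkey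
  set y : ℕ → ℕ := fun t => x (i + t % L) with hy
  have hyper : ∀ t, y (t + L) = y t := by
    intro t
    simp only [hy, Nat.add_mod_right]
  have hloc : ∀ s, s < L + n → x (i + s) = x (i + s % L) := by
    intro s
    induction s using Nat.strong_induction_on with
    | _ s ih =>
      intro hs
      rcases lt_or_ge s L with h1 | h1
      · rw [Nat.mod_eq_of_lt h1]
      · have hr : s - L < n := by omega
        have e1 : x (i + s) = x (i + (s - L)) := by
          have h2 := heqw (s - L) hr
          have e2 : i + L + (s - L) = i + s := by omega
          rw [e2] at h2
          exact h2.symm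
        rw [e1, ih (s - L) (by omega) (by omega)]
        congr 1
        conv_rhs => rw [Nat.mod_eq_sub_mod h1]
  have hwin_eq : ∀ t, t < L → win n y t = win n x (i + t) := by
    intro t ht
    apply win_congr
    intro r hr
    simp only [hy]
    rw [← hloc (t + r) (by omega)]
    congr 1
    omega
  have hwin_per : ∀ t, win n y t = win n y (t % L) := fun t => win_mod hL hyper t
  have hinfix : ∀ t, t < L → win n x (i + t) <:+: w := by
    intro t ht
    apply win_is_infix
    omega
  have hwinpat : ∀ t, t < L → IsPattern (win n x (i + t)) ∧ ∀ z ∈ win n x (i + t), z ≤ m := by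
    intro t ht
    refine ⟨hw.2 _ (hinfix t ht) (win_length _ _ _), ?_⟩
    intro z hz
    exact (hw.1 z ((hinfix t ht).subset hz)).2
  have havSig : ∀ t, ¬ InSig n (Wf n y t) := by
    intro t hsig
    have ht' : t % L < L := Nat.mod_lt _ hL
    have h1 : Wf n y t = Wt n (win n x (i + t % L)) := by
      rw [← Wt_win n y t, hwin_per t, hwin_eq _ ht']
    have hmem := mem_SFin_of_sig hn (win_length n x (i + t % L))
      ⟨(hwinpat _ ht').1, (hwinpat _ ht').2⟩ (by rw [← h1]; exact hsig)
    exact hav _ hmem (hinfix _ ht')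
  have hyn : ∀ t, y (t + n) = y t := core_period hn hL y hyper havSig
  have hv0 : win n y 0 = win n x (i + 0) := hwin_eq 0 hL
  have hvC : {q : List ℕ | win n y 0 ~r q} ∈ PClasses n m := by
    refine ⟨win n y 0, win_length _ _ _, ⟨?_, ?_⟩, rfl⟩
    · rw [hv0]
      exact (hwinpat 0 hL).1
    · rw [hv0]
      exact (hwinpat 0 hL).2
  have hrot_infix : ∀ s, (win n y 0).rotate s <:+: w := by
    intro s
    rw [win_rotate (by omega) hyn s, hwin_per s, hwin_eq _ (Nat.mod_lt _ hL)]
    exact hinfix _ (Nat.mod_lt _ hL)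
  obtain ⟨s, hs⟩ := (repC_mem hvC : win n y 0 ~r repC n _)
  exact hav _ (repC_mem_SFin hvC) (hs ▸ hrot_infix s)

lemma SFin_unavoidable {n m : ℕ} (hn : 2 ≤ n) : UnavoidableP n m (↑(SFin n m)) := by
  apply Set.Finite.subset (finite_bounded_lists m ((m + 1) ^ n + n))
  rintro w ⟨hw, hav⟩
  refine ⟨le_of_lt (avoid_length_bound hn hw fun s hs => hav s (Finset.mem_coe.2 hs)), ?_⟩
  intro z hz
  exact (hw.1 z hz).2

lemma join_rep {n : ℕ} (hn : 0 < n) {p : List ℕ} (hlen : p.length = n) (k : ℕ) :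
    (List.replicate k p).flatten = win (k * n) (fun t => p.getD (t % n) 0) 0 := by
  induction k with
  | zero => simp [win]
  | succ k ih =>
    have hstep : List.replicate (k + 1) p = p :: List.replicate k p := rfl
    rw [hstep]
    show p ++ (List.replicate k p).flatten = _
    rw [ih]
    have e : (k + 1) * n = n + k * n := by ring
    rw [e]
    show p ++ win (k * n) (fun t => p.getD (t % n) 0) 0 = _
    unfold win
    rw [List.range_add, List.map_append, List.map_map]
    congr 1
    · conv_lhs => rw [self_eq_win_mod hlen hn]
      rfl
    · apply List.map_congr_left
      intro r _
      simp only [Function.comp_apply, zero_add]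
      congr 1
      rw [Nat.add_comm n r, Nat.add_mod_right]

lemma lower_bound (n m : ℕ) (hn : 1 ≤ n) (S' : Finset (List ℕ))
    (hprops : ∀ p ∈ S', p.length = n ∧ PatternOver m p)
    (hunav : UnavoidableP n m (↑S' : Set (List ℕ))) : Tp n m ≤ S'.card := by
  classical
  have hit : ∀ C ∈ PClasses n m, ∃ q, q ∈ C ∧ q ∈ S' := by
    intro C hC
    by_contra hno
    push_neg at hno
    obtain ⟨p, hlen, hpat, rfl⟩ := hC
    set y : ℕ → ℕ := fun t => p.getD (t % n) 0 with hy
    have hyper : ∀ t, y (t + n) = y t := by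
      intro t
      simp only [hy, Nat.add_mod_right]
    have hp0 : win n y 0 = p := (self_eq_win_mod hlen (by omega)).symm
    have hjr : ∀ k, (List.replicate k p).flatten = win (k * n) y 0 := join_rep (by omega) hlen
    have hfam : ∀ k : ℕ, (List.replicate k p).flatten ∈
        {w | IsNPatternWord n m w ∧ ∀ s ∈ (↑S' : Set (List ℕ)), ¬ s <:+: w} := by
      intro k
      have hrotwin : ∀ idx, win n y idx = p.rotate idx := by
        intro idx
        rw [← win_rotate (by omega) hyper idx, hp0]
      constructor
      · constructor
        · intro z hz
          have hzp : z ∈ p := by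
            obtain ⟨l, hl, hzl⟩ := List.mem_flatten.1 hz
            rwa [List.eq_of_mem_replicate hl] at hzl
          obtain ⟨kk, hk1, hiff⟩ := hpat.1
          exact ⟨((hiff z).1 hzp).1, hpat.2 z hzp⟩
        · intro u hu hulen
          rw [hjr k] at hu
          obtain ⟨idx, hidx, rfl⟩ := infix_win hu hulen
          rw [hrotwin idx]
          exact rotate_pattern hpat.1 idx
      · intro s hs hinf
        have hsS : s ∈ S' := hs
        have hslen : s.length = n := (hprops s hsS).1
        rw [hjr k] at hinf
        obtain ⟨idx, hidx, rfl⟩ := infix_win hinf hslen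
        have hin : p ~r win n y idx := ⟨idx, by rw [hrotwin idx]⟩
        exact hno _ hin hsS
    have hinj : Function.Injective (fun k : ℕ => (List.replicate k p).flatten) := by
      intro a b hab
      have ha := congrArg List.length hab
      simp only [hjr a, hjr b, win_length] at ha
      exact Nat.eq_of_mul_eq_mul_right (by omega) ha
    exact (Set.infinite_of_injective_forall_mem hinj hfam) hunav
  choose! g hg1 hg2 using hit
  have hcard : (PClasses n m).ncard ≤ (↑S' : Set (List ℕ)).ncard := by
    apply Set.ncard_le_ncard_of_injOn (t := (↑S' : Set (List ℕ))) g (fun C hC => hg2 C hC)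
      (fun C hC C' hC' hgg => class_eq hC hC' (hg1 C hC) (hgg ▸ hg1 C' hC'))
      S'.finite_toSet
  rw [Tp_eq]
  rwa [Set.ncard_coe_finset] at hcard

lemma pattern_one {p : List ℕ} (hlen : p.length = 1) (hpat : IsPattern p) : p = [1] := by
  obtain ⟨x, rfl⟩ := List.length_eq_one_iff.1 hlen
  obtain ⟨k, hk, hiff⟩ := hpat
  have h1 : (1 : ℕ) ∈ [x] := (hiff 1).2 ⟨le_refl 1, hk⟩
  simp only [List.mem_singleton] at h1
  rw [← h1]

lemma class_one : {q : List ℕ | [1] ~r q} = {([1] : List ℕ)} := by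
  ext q
  constructor
  · rintro ⟨s, hs⟩
    rw [List.rotate_singleton] at hs
    exact hs.symm
  · rintro rfl
    exact List.IsRotated.refl _

lemma Tp_one (m : ℕ) (hm : 1 ≤ m) : Tp 1 m = 1 := by
  rw [Tp_eq]
  have he : PClasses 1 m = {({[1]} : Set (List ℕ))} := by
    ext C
    constructor
    · rintro ⟨p, hlen, hpat, rfl⟩
      rw [pattern_one hlen hpat.1, class_one]
      rfl
    · rintro rfl
      refine ⟨[1], rfl, ⟨⟨1, le_refl 1, fun x => ?_⟩, fun x hx => ?_⟩, class_one.symm⟩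
      · simp only [List.mem_singleton]
        omega
      · simp only [List.mem_singleton] at hx
        omega
  rw [he, Set.ncard_singleton]

lemma one_unavoidable (m : ℕ) : UnavoidableP 1 m (↑({[1]} : Finset (List ℕ))) := by
  apply Set.Finite.subset (Set.finite_singleton ([] : List ℕ))
  rintro w ⟨hw, hav⟩
  simp only [Set.mem_singleton_iff]
  by_contra hne
  obtain ⟨a, t, rfl⟩ : ∃ a t, w = a :: t := by
    cases w with
    | nil => exact absurd rfl hne
    | cons a t => exact ⟨a, t, rfl⟩
  have hinf : [a] <:+: a :: t := ⟨[], t, by simp⟩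
  have hpat : IsPattern [a] := hw.2 [a] hinf rfl
  have ha : [a] = [1] := pattern_one rfl hpat
  rw [ha] at hinf
  exact hav [1] (by simp) hinf


theorem stmt_7 (n m : ℕ) (hn : 1 ≤ n) (hm : 1 ≤ m) :
    -- M_p(n,m) = T_p(n,m): the minimum cardinality of an unavoidable set of
    -- patterns of length n over [m] equals the number of conjugacy classes
    IsLeast {k : ℕ | ∃ S : Finset (List ℕ),
      (∀ p ∈ S, p.length = n ∧ PatternOver m p) ∧
      UnavoidableP n m (↑S : Set (List ℕ)) ∧ S.card = k} (Tp n m) := by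
  constructor
  · rcases eq_or_lt_of_le hn with h1 | h2
    · subst h1
      refine ⟨{[1]}, ?_, one_unavoidable m, ?_⟩
      · intro p hp
        simp only [Finset.mem_singleton] at hp
        subst hp
        refine ⟨rfl, ⟨1, le_refl 1, fun x => ?_⟩, fun x hx => ?_⟩
        · simp only [List.mem_singleton]
          omega
        · simp only [List.mem_singleton] at hx
          omega
      · rw [Tp_one m hm]
        rfl
    · exact ⟨SFin n m, SFin_props, SFin_unavoidable h2, SFin_card n m⟩
  · rintro k ⟨S', hp, hu, rfl⟩
    exact lower_bound n m hn S' hp hu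
end

section
/- For all n, m ≥ 2, L_p(n,m) = C_p(n,m) + n − 1. -/
namespace Stmt9
open List

open List

lemma window_infix {α : Type*} (w : List α) (p n : ℕ) : (w.drop p).take n <:+: w :=
  List.infix_iff_prefix_suffix.mpr ⟨w.drop p, take_prefix _ _, drop_suffix _ _⟩

lemma length_window {α : Type*} {w : List α} {p n : ℕ} (h : p + n ≤ w.length) :
    ((w.drop p).take n).length = n := by
  simp only [length_take, length_drop]; omega

lemma infix_window {α : Type*} {u w : List α} (h : u <:+: w) :
    ∃ p, p + u.length ≤ w.length ∧ u = (w.drop p).take u.length := by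
  obtain ⟨s, t, rfl⟩ := h
  refine ⟨s.length, by simp only [length_append]; omega, ?_⟩
  rw [append_assoc, drop_left' rfl, take_append_of_le_length le_rfl, take_length]

lemma infix_split {α : Type*} {u A B : List α} {n : ℕ} (hn : 1 ≤ n)
    (hu : u <:+: A ++ B) (hlen : u.length = n) :
    u <:+: A ++ B.take (n - 1) ∨ u <:+: B := by
  obtain ⟨p, hp, he⟩ := infix_window hu
  rw [hlen] at hp he
  rw [length_append] at hp
  by_cases hpA : p < A.length
  · left
    have h1 : u = ((A ++ B.take (n - 1)).drop p).take n := by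
      rw [← take_length_add_append, drop_take, take_take, he]
      congr 1
      omega
    rw [h1]
    exact window_infix _ _ _
  · right
    have h1 : (A ++ B).drop p = B.drop (p - A.length) := by
      conv_lhs => rw [show p = A.length + (p - A.length) by omega, ← drop_drop, drop_left' rfl]
    rw [he, h1]
    exact window_infix _ _ _

lemma overlap_iff {α : Type*} {u v : List α} {n : ℕ} (hn : 1 ≤ n)
    (hu : u.length = n) (hv : v.length = n) :
    Overlap u v ↔ u.drop 1 = v.take (n - 1) := by
  constructor
  · rintro ⟨a, b, w', rfl, rfl⟩
    have hw' : w'.length = n - 1 := by simp at hu; omega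
    rw [take_append_of_le_length (le_of_eq hw'.symm)]
    simp only [List.drop_succ_cons, List.drop_zero]
    rw [← hw', take_length]
  · intro h
    obtain ⟨a, u', rfl⟩ : ∃ a u', u = a :: u' := by
      cases u with
      | nil => simp at hu; omega
      | cons a u' => exact ⟨a, u', rfl⟩
    obtain ⟨b, hb⟩ : ∃ b, v.drop (n - 1) = [b] :=
      length_eq_one_iff.mp (by simp only [length_drop, hv]; omega)
    simp only [List.drop_succ_cons, List.drop_zero] at h
    exact ⟨a, b, u', rfl, by rw [h, ← hb, take_append_drop]⟩

lemma window_drop_one {α : Type*} (w : List α) (t n : ℕ) :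
    ((w.drop t).take n).drop 1 = (w.drop (t + 1)).take (n - 1) := by
  rw [drop_take, drop_drop]

lemma window_take {α : Type*} (w : List α) (t n : ℕ) :
    ((w.drop t).take n).take (n - 1) = (w.drop t).take (n - 1) := by
  rw [take_take]; congr 1; omega

lemma window_overlap {α : Type*} {w : List α} {n t : ℕ} (hn : 1 ≤ n) (h : t + 1 + n ≤ w.length) :
    Overlap ((w.drop t).take n) ((w.drop (t + 1)).take n) := by
  rw [overlap_iff hn (length_window (by omega)) (length_window (by omega))]
  rw [window_drop_one, window_take]

lemma overlap_window_eq {α : Type*} {w : List α} {n i j : ℕ} (hn : 1 ≤ n)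
    (hi : i + n ≤ w.length) (hj : j + n ≤ w.length)
    (hov : Overlap ((w.drop j).take n) ((w.drop i).take n)) :
    (w.drop (j + 1)).take (n - 1) = (w.drop i).take (n - 1) := by
  rw [overlap_iff hn (length_window hj) (length_window hi)] at hov
  rw [window_drop_one, window_take] at hov
  exact hov

lemma window_append_left {α : Type*} {A B : List α} {p q : ℕ} (h : p + q ≤ A.length) :
    ((A ++ B).drop p).take q = (A.drop p).take q := by
  rw [drop_append, show p - A.length = 0 by omega, drop_zero,
    take_append, show q - (A.drop p).length = 0 by rw [length_drop]; omega]
  simp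



/-- The pumped word: insert `k` copies of the block `w[i..i+L)` at position `i`. -/
def pump {α : Type*} (w : List α) (i L k : ℕ) : List α :=
  w.take i ++ ((List.replicate k ((w.drop i).take L)).flatten ++ w.drop i)

lemma pump_zero {α : Type*} (w : List α) (i L : ℕ) : pump w i L 0 = w := by
  simp [pump]

lemma pump_length {α : Type*} (w : List α) {i L : ℕ} (k : ℕ) (h : i + L ≤ w.length) :
    (pump w i L k).length = w.length + k * L := by
  have h1 : ((w.drop i).take L).length = L := length_window (by omega)
  simp [pump, h1]
  omega

lemma pump_mem {α : Type*} {w : List α} {i L k : ℕ} {x : α} (hx : x ∈ pump w i L k) : x ∈ w := by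
  simp only [pump, mem_append, mem_flatten, mem_replicate] at hx
  rcases hx with h | h | h
  · exact mem_of_mem_take h
  · obtain ⟨l, ⟨-, rfl⟩, hxl⟩ := h
    exact mem_of_mem_drop (mem_of_mem_take hxl)
  · exact mem_of_mem_drop h

section PumpInfix

variable {α : Type*} {w : List α} {n i j : ℕ}

lemma pump_tailtake (hn : 1 ≤ n) (hij : i ≤ j) (hjn : j + n ≤ w.length)
    (hov : (w.drop (j + 1)).take (n - 1) = (w.drop i).take (n - 1)) (k : ℕ) :
    ((List.replicate k ((w.drop i).take (j + 1 - i))).flatten ++ w.drop i).take (n - 1)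
      = (w.drop i).take (n - 1) := by
  set s := (w.drop i).take (j + 1 - i) with hs
  have hsl : s.length = j + 1 - i := length_window (by omega)
  induction k with
  | zero => simp
  | succ k ih =>
    rw [replicate_succ, flatten_cons, append_assoc, take_append, hsl]
    have h2 : ((List.replicate k s).flatten ++ w.drop i).take (n - 1 - (j + 1 - i))
        = (w.drop i).take (n - 1 - (j + 1 - i)) := by
      calc ((List.replicate k s).flatten ++ w.drop i).take (n - 1 - (j + 1 - i))
          = (((List.replicate k s).flatten ++ w.drop i).take (n - 1)).take
              (n - 1 - (j + 1 - i)) := by rw [take_take]; congr 1; omega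
        _ = ((w.drop i).take (n - 1)).take (n - 1 - (j + 1 - i)) := by rw [ih]
        _ = (w.drop i).take (n - 1 - (j + 1 - i)) := by rw [take_take]; congr 1; omega
    rw [h2, hs, take_take]
    by_cases hcase : j + 1 - i ≤ n - 1
    · rw [show (n - 1) ⊓ (j + 1 - i) = j + 1 - i by omega]
      have hre : (w.drop (j + 1)).take (n - 1 - (j + 1 - i))
          = (w.drop i).take (n - 1 - (j + 1 - i)) := by
        calc (w.drop (j + 1)).take (n - 1 - (j + 1 - i))
            = ((w.drop (j + 1)).take (n - 1)).take (n - 1 - (j + 1 - i)) := by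
              rw [take_take]; congr 1; omega
          _ = ((w.drop i).take (n - 1)).take (n - 1 - (j + 1 - i)) := by rw [hov]
          _ = (w.drop i).take (n - 1 - (j + 1 - i)) := by rw [take_take]; congr 1; omega
      conv_rhs => rw [show n - 1 = (j + 1 - i) + (n - 1 - (j + 1 - i)) by omega, take_add,
        drop_drop, show i + (j + 1 - i) = j + 1 by omega]
      rw [← hre]
    · rw [show n - 1 - (j + 1 - i) = 0 by omega, show (n - 1) ⊓ (j + 1 - i) = n - 1 by omega]
      simp

lemma pump_succ_eq (hij : i ≤ j) (hjn : j + 1 ≤ w.length) (k : ℕ) :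
    pump w i (j + 1 - i) (k + 1)
      = w.take (j + 1) ++ ((List.replicate k ((w.drop i).take (j + 1 - i))).flatten
          ++ w.drop i) := by
  have htak : w.take i ++ (w.drop i).take (j + 1 - i) = w.take (j + 1) := by
    rw [← take_add]; congr 1; omega
  rw [pump, replicate_succ, flatten_cons, append_assoc, ← append_assoc (w.take i), htak]

lemma pump_infix (hn : 1 ≤ n) (hij : i ≤ j) (hjn : j + n ≤ w.length)
    (hov : (w.drop (j + 1)).take (n - 1) = (w.drop i).take (n - 1)) (k : ℕ) :
    ∀ u : List α, u <:+: pump w i (j + 1 - i) k → u.length = n → u <:+: w := by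
  induction k with
  | zero => intro u hu _; rwa [pump_zero] at hu
  | succ k ih =>
    intro u hu hlen
    rw [pump_succ_eq hij (by omega) k] at hu
    rcases infix_split hn hu hlen with h | h
    · rw [pump_tailtake hn hij hjn hov k, ← hov, ← take_add] at h
      exact h.trans (take_prefix _ _).isInfix
    · exact ih u (h.trans
        (show _ <:+ pump w i (j + 1 - i) k from suffix_append _ _).isInfix) hlen

end PumpInfix


lemma no_backstep {n m : ℕ} (hn : 1 ≤ n) {S : Set (List ℕ)} {w : List ℕ}
    (hSlen : ∀ p ∈ S, p.length = n) (hun : UnavoidableP n m S)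
    (hw : IsNPatternWord n m w) (hav : ∀ s ∈ S, ¬ s <:+: w)
    {i j : ℕ} (hij : i ≤ j) (hjn : j + n ≤ w.length)
    (hov : Overlap ((w.drop j).take n) ((w.drop i).take n)) : False := by
  have hov' := overlap_window_eq hn (by omega) hjn hov
  have hinf := pump_infix hn hij hjn hov'
  have hinj : Function.Injective (fun k => pump w i (j + 1 - i) k) := by
    intro a b hab
    have ha := pump_length w (i := i) (L := j + 1 - i) a (by omega)
    have hb := pump_length w (i := i) (L := j + 1 - i) b (by omega)
    have hab' : pump w i (j + 1 - i) a = pump w i (j + 1 - i) b := hab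
    rw [hab', hb] at ha
    exact Nat.eq_of_mul_eq_mul_right (show 0 < j + 1 - i by omega)
      (show a * (j + 1 - i) = b * (j + 1 - i) by omega)
  refine (Set.infinite_of_injective_forall_mem hinj (fun k => ?_)) hun
  refine ⟨⟨fun x hx => hw.1 x (pump_mem hx), fun u hu hul => hw.2 u (hinf k u hu hul) hul⟩, ?_⟩
  intro s hs hsin
  exact hav s hs (hinf k s hsin (hSlen s hs))

lemma finite_words (L m : ℕ) : {l : List ℕ | l.length ≤ L ∧ ∀ x ∈ l, x ≤ m}.Finite := by
  have h : {l : List ℕ | l.length ≤ L ∧ ∀ x ∈ l, x ≤ m} ⊆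
      (List.map (Fin.val : Fin (m + 1) → ℕ)) '' {l : List (Fin (m + 1)) | l.length ≤ L} := by
    rintro l ⟨h1, h2⟩
    refine ⟨l.map (fun x => ⟨min x m, by omega⟩), by simpa using h1, ?_⟩
    rw [List.map_map]
    conv_rhs => rw [← List.map_id l]
    exact List.map_congr_left (fun x hx => by simp [Nat.min_eq_left (h2 x hx)])
  exact ((List.finite_length_le _ L).image _).subset h



lemma glue {n C : ℕ} (hn : 1 ≤ n) {v : Fin C → List ℕ}
    (hv1 : ∀ i, (v i).length = n)
    (hv3 : ∀ i : Fin C, ∀ h : (i : ℕ) + 1 < C, Overlap (v i) (v ⟨(i : ℕ) + 1, h⟩)) :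
    ∀ k (hk : k < C), ∃ w : List ℕ, w.length = (k + 1) + (n - 1) ∧
      (∀ x ∈ w, ∃ p : Fin C, x ∈ v p) ∧
      ∀ p (hp : p ≤ k), (w.drop p).take n = v ⟨p, lt_of_le_of_lt hp hk⟩ := by
  intro k
  induction k with
  | zero =>
    intro hk
    refine ⟨v ⟨0, hk⟩, by rw [hv1]; omega, fun x hx => ⟨⟨0, hk⟩, hx⟩, ?_⟩
    intro p hp
    have hp0 : p = 0 := by omega
    subst hp0
    rw [drop_zero, take_of_length_le (le_of_eq (hv1 _))]
  | succ k ih =>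
    intro hk
    obtain ⟨w', hl, hm, hwin⟩ := ih (by omega)
    obtain ⟨a, b, mid, h1, h2⟩ := hv3 ⟨k, by omega⟩ hk
    refine ⟨w' ++ [b], by rw [length_append, hl]; simp; omega, ?_, ?_⟩
    · intro x hx
      rcases mem_append.mp hx with h | h
      · exact hm x h
      · refine ⟨⟨k + 1, hk⟩, ?_⟩
        rw [h2]
        simp only [mem_singleton] at h
        simp [h]
    · intro p hp
      rcases Nat.lt_or_ge p (k + 1) with hpk | hpk
      · rw [window_append_left (by omega), hwin p (by omega)]
      · have hpe : p = k + 1 := by omega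
        subst hpe
        have hdk : w'.drop k = v ⟨k, by omega⟩ := by
          rw [← hwin k le_rfl]
          exact (take_of_length_le (by rw [length_drop, hl]; omega)).symm
        have hdk1 : w'.drop (k + 1) = mid := by
          have hh : w'.drop (k + 1) = (w'.drop k).drop 1 := by rw [drop_drop]
          rw [hh, hdk, h1]
          simp
        rw [drop_append, hdk1, show k + 1 - w'.length = 0 by omega, drop_zero,
          ← h2, take_of_length_le (le_of_eq (hv1 _))]


end Stmt9

theorem stmt_9 (n m : ℕ) (hn : 2 ≤ n) (hm : 2 ≤ m) :
    ∃ C : ℕ,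
      -- C = C_p(n,m): the greatest number of vertices of a chord-free simple
      -- path in the graph of pattern overlaps P_n over [m] passing through no
      -- vertex having a loop
      IsGreatest {k : ℕ | ∃ v : Fin k → List ℕ,
        (∀ i, (v i).length = n ∧ PatternOver m (v i)) ∧ Function.Injective v ∧
        (∀ i : Fin k, ∀ h : (i : ℕ) + 1 < k, Overlap (v i) (v ⟨(i : ℕ) + 1, h⟩)) ∧
        (∀ i j : Fin k, i ≤ j → ¬ Overlap (v j) (v i))} C ∧
      -- L_p(n,m) = C_p(n,m) + n - 1, where L_p(n,m) is the maximum over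
      -- unavoidable sets S of patterns of length n over [m] of the maximum
      -- length of an S-free n-pattern word over [m]
      IsGreatest {ℓ : ℕ | ∃ S : Set (List ℕ),
        (∀ p ∈ S, p.length = n ∧ PatternOver m p) ∧ UnavoidableP n m S ∧
        ∃ w : List ℕ, IsNPatternWord n m w ∧ (∀ s ∈ S, ¬ s <:+: w) ∧ w.length = ℓ}
        (C + n - 1) := by
  classical
  set SC : Set ℕ := {k : ℕ | ∃ v : Fin k → List ℕ,
    (∀ i, (v i).length = n ∧ PatternOver m (v i)) ∧ Function.Injective v ∧
    (∀ i : Fin k, ∀ h : (i : ℕ) + 1 < k, Overlap (v i) (v ⟨(i : ℕ) + 1, h⟩)) ∧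
    (∀ i j : Fin k, i ≤ j → ¬ Overlap (v j) (v i))} with hSCdef
  have hFfin : {l : List ℕ | l.length ≤ n ∧ ∀ x ∈ l, x ≤ m}.Finite := Stmt9.finite_words n m
  haveI hFf : Finite ↥{l : List ℕ | l.length ≤ n ∧ ∀ x ∈ l, x ≤ m} := hFfin
  have hbdd : BddAbove SC := by
    refine ⟨Nat.card ↥{l : List ℕ | l.length ≤ n ∧ ∀ x ∈ l, x ≤ m}, ?_⟩
    rintro k ⟨v, h1, h2, -, -⟩
    have hmemF : ∀ t : Fin k, v t ∈ {l : List ℕ | l.length ≤ n ∧ ∀ x ∈ l, x ≤ m} :=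
      fun t => ⟨le_of_eq (h1 t).1, (h1 t).2.2⟩
    have hinj : Function.Injective
        (fun t : Fin k => (⟨v t, hmemF t⟩ : ↥{l : List ℕ | l.length ≤ n ∧ ∀ x ∈ l, x ≤ m})) :=
      fun a b hab => h2 (congrArg Subtype.val hab)
    have := Nat.card_le_card_of_injective _ hinj
    rwa [Nat.card_eq_fintype_card (α := Fin k), Fintype.card_fin] at this
  have hne : SC.Nonempty :=
    ⟨0, Fin.elim0, fun i => i.elim0, fun a b h => a.elim0, fun i => i.elim0, fun i => i.elim0⟩
  obtain ⟨C, hCmem, hCub⟩ : ∃ C, IsGreatest SC C :=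
    ⟨sSup SC, Nat.sSup_mem hne hbdd, fun k hk => le_csSup hbdd hk⟩
  refine ⟨C, ⟨hCmem, hCub⟩, ?_, ?_⟩
  · -- membership of C + n - 1 in the L set
    obtain ⟨v, hv1, hv2, hv3, hv4⟩ := hCmem
    have hvletters : ∀ (p : Fin C), ∀ x ∈ v p, 1 ≤ x ∧ x ≤ m := by
      intro p x hx
      obtain ⟨⟨k', hk', hiff⟩, hle⟩ := (hv1 p).2
      exact ⟨((hiff x).1 hx).1, hle x hx⟩
    obtain ⟨w, hwlen, hwletters, hwwin⟩ :
        ∃ w : List ℕ, w.length = C + n - 1 ∧ (∀ x ∈ w, 1 ≤ x ∧ x ≤ m) ∧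
          (∀ u, u <:+: w → u.length = n → ∃ p : Fin C, u = v p) := by
      rcases Nat.eq_zero_or_pos C with hC0 | hC1
      · refine ⟨List.replicate (n - 1) 1, by rw [List.length_replicate, hC0]; omega, ?_, ?_⟩
        · intro x hx
          rw [List.eq_of_mem_replicate hx]
          omega
        · intro u hu hul
          exfalso
          have hle := hu.length_le
          rw [List.length_replicate, hul] at hle
          omega
      · obtain ⟨w, h1, h2, h3⟩ := Stmt9.glue (by omega) (fun i => (hv1 i).1) hv3 (C - 1) (by omega)
        refine ⟨w, by omega, ?_, ?_⟩
        · intro x hx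
          obtain ⟨p, hp⟩ := h2 x hx
          exact hvletters p x hp
        · intro u hu hul
          obtain ⟨p, hple, hpe⟩ := Stmt9.infix_window hu
          rw [hul] at hple hpe
          have hpC : p ≤ C - 1 := by omega
          have hpC' : p < C := by omega
          exact ⟨⟨p, hpC'⟩, by rw [hpe, h3 p hpC]⟩
    have hwnp : IsNPatternWord n m w := by
      refine ⟨hwletters, fun u hu hul => ?_⟩
      obtain ⟨p, rfl⟩ := hwwin u hu hul
      exact (hv1 p).2.1
    refine ⟨{p : List ℕ | p.length = n ∧ PatternOver m p ∧ ¬ p <:+: w},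
      fun p hp => ⟨hp.1, hp.2.1⟩, ?_, w, hwnp, fun s hs => hs.2.2, hwlen⟩
    -- unavoidability
    refine (Stmt9.finite_words (C + n - 1) m).subset ?_
    rintro u ⟨⟨hul, hupat⟩, huav⟩
    refine ⟨?_, fun x hx => (hul x hx).2⟩
    by_contra hlong
    push_neg at hlong
    have hsub : ∀ t, t + n ≤ u.length → ∃ p : Fin C, (u.drop t).take n = v p := by
      intro t ht
      have hinf : (u.drop t).take n <:+: u := Stmt9.window_infix u t n
      by_cases hiw : (u.drop t).take n <:+: w
      · obtain ⟨p, hp⟩ := hwwin _ hiw (Stmt9.length_window ht)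
        exact ⟨p, hp⟩
      · exact absurd hinf (huav _ ⟨Stmt9.length_window ht,
          ⟨hupat _ hinf (Stmt9.length_window ht),
            fun x hx => (hul x (hinf.subset hx)).2⟩, hiw⟩)
    have hmono : ∀ t, t + n ≤ u.length → ∃ p : Fin C, t ≤ (p : ℕ) ∧ (u.drop t).take n = v p := by
      intro t
      induction t with
      | zero =>
        intro ht
        obtain ⟨p, hp⟩ := hsub 0 ht
        exact ⟨p, Nat.zero_le _, hp⟩
      | succ t ih =>
        intro ht
        obtain ⟨p, htp, hpe⟩ := ih (by omega)
        obtain ⟨p', hpe'⟩ := hsub (t + 1) ht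
        have hov : Overlap (v p) (v p') := by
          rw [← hpe, ← hpe']
          exact Stmt9.window_overlap (by omega) ht
        have hlt : (p : ℕ) < (p' : ℕ) := by
          by_contra hge
          push_neg at hge
          exact hv4 p' p (Fin.le_def.mpr hge) hov
        exact ⟨p', by omega, hpe'⟩
    obtain ⟨p, hple, -⟩ := hmono (u.length - n) (by omega)
    have hpl := p.isLt
    omega
  · -- upper bound
    rintro ℓ ⟨S, hS, hun, u, hu, hav, rfl⟩
    by_cases hsmall : u.length < n
    · omega
    push_neg at hsmall
    set k := u.length - n + 1 with hk
    have hkmem : k ∈ SC := by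
      refine ⟨fun t : Fin k => (u.drop ((t : ℕ))).take n, ?_, ?_, ?_, ?_⟩
      · intro t
        have ht : (t : ℕ) + n ≤ u.length := by have := t.isLt; omega
        exact ⟨Stmt9.length_window ht,
          hu.2 _ (Stmt9.window_infix u _ n) (Stmt9.length_window ht),
          fun x hx => (hu.1 x ((Stmt9.window_infix u _ n).subset hx)).2⟩
      · have haux : ∀ a b : Fin k, (a : ℕ) < (b : ℕ) →
            (u.drop ((a : ℕ))).take n = (u.drop ((b : ℕ))).take n → False := by
          intro a b habl heq
          have hb1 : (b : ℕ) - 1 + 1 = (b : ℕ) := by omega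
          have hov : Overlap ((u.drop ((b : ℕ) - 1)).take n) ((u.drop ((a : ℕ))).take n) := by
            have hwo := Stmt9.window_overlap (w := u) (n := n) (t := (b : ℕ) - 1)
              (by omega) (by have := b.isLt; omega)
            rw [hb1] at hwo
            rwa [← heq] at hwo
          exact Stmt9.no_backstep (by omega) (fun p hp => (hS p hp).1) hun hu hav
            (show (a : ℕ) ≤ (b : ℕ) - 1 by omega) (by have := b.isLt; omega) hov
        intro a b hab
        have hab' : (u.drop ((a : ℕ))).take n = (u.drop ((b : ℕ))).take n := hab
        rcases lt_trichotomy ((a : ℕ)) ((b : ℕ)) with h | h | h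
        · exact (haux a b h hab').elim
        · exact Fin.ext h
        · exact (haux b a h hab'.symm).elim
      · intro t htk
        exact Stmt9.window_overlap (by omega) (by have := htk; omega)
      · intro i j hij hov
        exact Stmt9.no_backstep (by omega) (fun p hp => (hS p hp).1) hun hu hav
          (show (i : ℕ) ≤ (j : ℕ) from hij) (by have := j.isLt; omega) hov
    have hkC : k ≤ C := hCub hkmem
    omega
end
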